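/- arXiv:math/0601214 — 8 statements merged into one kernel-verified Lean document; each statement's English description precedes it below -/
import Mathlib

section
/- Let S ⊆ ℕ be a set that contains a nonzero element and is closed under addition, and let e be the greatest common divisor of the elements of S. For every positive integer p, the set S_p = {m ∈ ℕ : p·m ∈ S} also contains a nonzero element, is closed under addition, and the greatest common divisor of the elements of S_p equals e / gcd(p, e). -/
/-- `e` is the greatest common divisor of the elements of `S`:
it divides every element of `S`, and any common divisor of the elements of `S` divides it. -/
def IsGcdOfSet (e : ℕ) (S : Set ℕ) : Prop :=
  (∀ s ∈ S, e ∣ s) ∧ ∀ c : ℕ, (∀ s ∈ S, c ∣ s) → c ∣ e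

private lemma nsmul_mem_of_addclosed (S : Set ℕ)
    (hSadd : ∀ a ∈ S, ∀ b ∈ S, a + b ∈ S) :
    ∀ k, 0 < k → ∀ s ∈ S, k * s ∈ S := by
  intro k
  induction k with
  | zero => intro h; omega
  | succ n ih =>
    intro _ s hs
    rcases Nat.eq_zero_or_pos n with h | h
    · simpa [h] using hs
    · have h2 : n * s + s ∈ S := hSadd _ (ih h s hs) _ hs
      simpa [Nat.succ_mul] using h2

private lemma key_large_multiples (S : Set ℕ)
    (hS0 : ∃ n ∈ S, n ≠ 0)
    (hSadd : ∀ a ∈ S, ∀ b ∈ S, a + b ∈ S)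
    (e : ℕ) (he : IsGcdOfSet e S) :
    ∃ N : ℕ, 0 < N ∧ ∀ k ≥ N, k * e ∈ S := by
  obtain ⟨s₀, hs₀S, hs₀⟩ := hS0
  set Q : ℕ → Prop := fun n => n = 0 ∨ n ∈ S with hQ
  have hQadd : ∀ a b, Q a → Q b → Q (a + b) := by
    rintro a b (rfl | ha) (rfl | hb)
    · left; rfl
    · right; simpa using hb
    · right; simpa using ha
    · right; exact hSadd _ ha _ hb
  have hQsmul : ∀ q a, Q a → Q (q * a) := by
    rintro q a (rfl | ha)
    · left; simp
    · rcases Nat.eq_zero_or_pos q with h | h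
      · left; simp [h]
      · right; exact nsmul_mem_of_addclosed S hSadd q h a ha
  have hQdvd : ∀ a, Q a → e ∣ a := by
    rintro a (rfl | ha)
    · exact dvd_zero e
    · exact he.1 _ ha
  set T : Set ℕ := {n | 0 < n ∧ ∃ a b, Q a ∧ Q b ∧ (n : ℤ) = (a : ℤ) - (b : ℤ)} with hT
  have hTne : T.Nonempty := by
    refine ⟨s₀, Nat.pos_of_ne_zero hs₀, s₀, 0, Or.inr hs₀S, Or.inl rfl, by simp⟩
  set g := sInf T with hg
  have hgT : g ∈ T := Nat.sInf_mem hTne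
  obtain ⟨hgpos, a, b, hQa, hQb, hab⟩ := hgT
  -- g divides every element of S
  have hgdvd : ∀ s ∈ S, g ∣ s := by
    intro s hs
    by_contra hns
    have hr : s % g ≠ 0 := fun h => hns (Nat.dvd_of_mod_eq_zero h)
    obtain ⟨r, cq, hrq, hrlt, hrne⟩ : ∃ r cq, g * cq + r = s ∧ r < g ∧ r ≠ 0 :=
      ⟨s % g, s / g, by rw [Nat.div_add_mod], Nat.mod_lt s hgpos, hr⟩
    have hrT : r ∈ T := by
      refine ⟨Nat.pos_of_ne_zero hrne, s + cq * b, cq * a,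
        hQadd _ _ (Or.inr hs) (hQsmul _ _ hQb), hQsmul _ _ hQa, ?_⟩
      have hrqZ : (g : ℤ) * cq + r = (s : ℤ) := by exact_mod_cast hrq
      push_cast
      linear_combination hrqZ - (cq : ℤ) * hab
    have := Nat.sInf_le hrT
    omega
  have hge : g = e := by
    have h1 : g ∣ e := he.2 g hgdvd
    have h2 : e ∣ g := by
      have : (e : ℤ) ∣ (g : ℤ) := by
        rw [hab]
        exact dvd_sub (Int.natCast_dvd_natCast.2 (hQdvd a hQa))
          (Int.natCast_dvd_natCast.2 (hQdvd b hQb))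
      exact_mod_cast this
    exact Nat.dvd_antisymm h1 h2
  subst hge
  clear_value g
  have hab' : a = b + g := by
    have : (a : ℤ) = (b : ℤ) + g := by linarith [hab]
    exact_mod_cast this
  obtain ⟨q, hq⟩ := hQdvd b hQb
  have hq' : b = q * g := by rw [hq]; ring
  have haval : a = (q + 1) * g := by rw [hab', hq']; ring
  have haS : a ∈ S := by
    rcases hQa with h | h
    · exfalso; omega
    · exact h
  rcases Nat.eq_zero_or_pos q with hq0 | hqpos
  · have hag : a = g := by rw [haval, hq0]; ring
    refine ⟨1, one_pos, fun k hk => ?_⟩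
    have := nsmul_mem_of_addclosed S hSadd k hk a haS
    rwa [hag] at this
  · have hbS : b ∈ S := by
      rcases hQb with h | h
      · exfalso; rw [hq'] at h; exact (Nat.mul_pos hqpos hgpos).ne' h
      · exact h
    refine ⟨q * q, Nat.mul_pos hqpos hqpos, fun k hk => ?_⟩
    have hrlt : k % q < q := Nat.mod_lt k hqpos
    have hcq : q ≤ k / q := (Nat.le_div_iff_mul_le hqpos).2 (by nlinarith)
    obtain ⟨r, u, hrlt2, hk2⟩ : ∃ r u, r < q ∧ q * (r + u) + r = k := by
      refine ⟨k % q, k / q - k % q, Nat.mod_lt k hqpos, ?_⟩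
      have h1 : k % q + (k / q - k % q) = k / q := by omega
      rw [h1, Nat.div_add_mod]
    have hkey : k * g = u * b + r * a := by
      rw [hq', haval, ← hk2]; ring
    rw [hkey]
    rcases Nat.eq_zero_or_pos r with hr0 | hrpos
    · rcases Nat.eq_zero_or_pos u with hu0 | hupos
      · exfalso; rw [hr0, hu0] at hk2; simp at hk2; nlinarith
      · simpa [hr0] using nsmul_mem_of_addclosed S hSadd _ hupos b hbS
    · rcases Nat.eq_zero_or_pos u with hu0 | hupos
      · simpa [hu0] using nsmul_mem_of_addclosed S hSadd _ hrpos a haS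
      · exact hSadd _ (nsmul_mem_of_addclosed S hSadd _ hupos b hbS)
          _ (nsmul_mem_of_addclosed S hSadd _ hrpos a haS)

theorem gcd_of_power_semigroup (S : Set ℕ)
    (hS0 : ∃ n ∈ S, n ≠ 0)
    (hSadd : ∀ a ∈ S, ∀ b ∈ S, a + b ∈ S)
    (e : ℕ) (he : IsGcdOfSet e S)
    (p : ℕ) (hp : 0 < p) :
    (∃ n ∈ {m : ℕ | p * m ∈ S}, n ≠ 0) ∧
      (∀ a ∈ {m : ℕ | p * m ∈ S}, ∀ b ∈ {m : ℕ | p * m ∈ S},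
        a + b ∈ {m : ℕ | p * m ∈ S}) ∧
      IsGcdOfSet (e / Nat.gcd p e) {m : ℕ | p * m ∈ S} := by
  obtain ⟨s₀, hs₀S, hs₀⟩ := hS0
  have hepos : 0 < e := by
    rcases he.1 s₀ hs₀S with ⟨c, hc⟩
    rcases Nat.eq_zero_or_pos e with h | h
    · exfalso; exact hs₀ (by simp [hc, h])
    · exact h
  set d := Nat.gcd p e with hd
  have hdpos : 0 < d := Nat.gcd_pos_of_pos_left e hp
  have hdp : d ∣ p := Nat.gcd_dvd_left p e
  have hde : d ∣ e := Nat.gcd_dvd_right p e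
  set e' := e / d with he'
  set p' := p / d with hp'
  have hee : e = d * e' := (Nat.mul_div_cancel' hde).symm
  have hpp : p = d * p' := (Nat.mul_div_cancel' hdp).symm
  have he'pos : 0 < e' := Nat.div_pos (Nat.le_of_dvd hepos hde) hdpos
  have hp'pos : 0 < p' := Nat.div_pos (Nat.le_of_dvd hp hdp) hdpos
  have hcop : Nat.Coprime p' e' := Nat.coprime_div_gcd_div_gcd hdpos
  obtain ⟨N, hNpos, hN⟩ := key_large_multiples S ⟨s₀, hs₀S, hs₀⟩ hSadd e he
  have hmem : ∀ k ≥ N, p * (k * e') ∈ S := by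
    intro k hk
    have h1 : p * (k * e') = (k * p') * e := by rw [hpp, hee]; ring
    rw [h1]
    exact hN _ (le_trans hk (Nat.le_mul_of_pos_right k hp'pos))
  refine ⟨⟨N * e', hmem N le_rfl, by positivity⟩,
    fun a ha b hb => ?_, ?_, ?_⟩
  · show p * (a + b) ∈ S
    have := hSadd _ ha _ hb
    simpa [Nat.mul_add] using this
  · intro m hm
    have h1 : e ∣ p * m := he.1 _ hm
    have h2 : d * e' ∣ d * p' * m := by rw [← hee, ← hpp]; exact h1
    have h3 : e' ∣ p' * m := by
      rcases h2 with ⟨t, ht⟩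
      refine ⟨t, Nat.eq_of_mul_eq_mul_left hdpos ?_⟩
      rw [← mul_assoc, ← mul_assoc]; exact ht
    exact Nat.Coprime.dvd_of_dvd_mul_left hcop.symm h3
  · intro c hc
    have h1 : c ∣ N * e' := hc _ (hmem N le_rfl)
    have h2 : c ∣ N * e' + e' := by
      have h3 : (N + 1) * e' = N * e' + e' := by ring
      have := hc _ (hmem (N + 1) (Nat.le_succ N))
      rwa [h3] at this
    exact (Nat.dvd_add_right h1).mp h2
end

section
/- Let S ⊆ ℕ contain a nonzero element and be closed under addition, let e = gcd S, let d ≥ 1 be an integer, and let h : ℕ → ℝ≥0 satisfy h(k + s) ≥ h(k) for every k ∈ ℕ and every s ∈ S. Fix f ∈ ℕ and a positive integer p, and for r ∈ ℕ set u_r = limsup_{k→∞} d!·h(f + (k·p + r)·e) / (f + (k·p + r)·e)^d, the limsup taken in [0, ∞]. Then u_r = u_0 for every r ∈ ℕ. -/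
/-!
Every large multiple `D * e` lies in `S`, so `h` does not decrease under a shift by `D * e`,
while the normalising factor changes only by `((n + D * e) / n) ^ d → 1`. Hence shifting a
sequence `n_k → ∞` by `D * e` cannot lower the limsup of `h(n) / n ^ d`. Choosing
`D ≡ r' - r (mod p)` turns the progression of `r` into a tail of the progression of `r'`, so
`u_r ≤ u_{r'}` for all `r, r'`.
-/

open Filter Topology
open scoped ENNReal NNReal

namespace ENNReal

theorem div_pow_le_div_pow_mul {x y a b : ℝ≥0∞} (hxy : x ≤ y) (hb₀ : b ≠ 0) (hb : b ≠ ∞)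
    (d : ℕ) : x / a ^ d ≤ y / b ^ d * (b / a) ^ d := by
  have hbd : (b ^ d)⁻¹ * b ^ d = 1 := ENNReal.inv_mul_cancel (pow_ne_zero d hb₀) (pow_ne_top hb)
  calc x / a ^ d ≤ y / a ^ d := ENNReal.div_le_div_right hxy _
    _ = y * ((b ^ d)⁻¹ * b ^ d) * (a ^ d)⁻¹ := by rw [hbd, mul_one, div_eq_mul_inv]
    _ = y / b ^ d * (b / a) ^ d := by
      simp only [div_eq_mul_inv, mul_pow, ENNReal.inv_pow]; ring

theorem tendsto_natCast_add_div_natCast {ι : Type*} {l : Filter ι} {n : ι → ℕ}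
    (hn : Tendsto n l atTop) (c : ℕ) :
    Tendsto (fun i => ((n i + c : ℕ) : ℝ≥0∞) / n i) l (𝓝 1) := by
  have hdiv : Tendsto (fun i => (c : ℝ≥0∞) / n i) l (𝓝 0) := by
    simpa using ENNReal.Tendsto.const_div (a := c) (tendsto_nat_nhds_top.comp hn)
      (Or.inr (natCast_ne_top c))
  have hsum : Tendsto (fun i => 1 + (c : ℝ≥0∞) / n i) l (𝓝 1) := by
    simpa using hdiv.const_add 1
  refine hsum.congr' ?_
  filter_upwards [hn.eventually_ne_atTop 0] with i hi
  rw [Nat.cast_add, ENNReal.add_div, ENNReal.div_self (by exact_mod_cast hi) (natCast_ne_top _)]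

theorem limsup_le_limsup_of_le_mul {ι : Type*} {l : Filter ι} [l.NeBot] {u v w : ι → ℝ≥0∞}
    (huv : u ≤ᶠ[l] v * w) (hw : Tendsto w l (𝓝 1)) : limsup u l ≤ limsup v l :=
  calc limsup u l ≤ limsup (v * w) l := limsup_le_limsup huv
    _ ≤ limsup v l * limsup w l :=
      limsup_mul_le' (Or.inr (by simp [hw.limsup_eq])) (Or.inr (by simp [hw.limsup_eq]))
    _ = limsup v l := by rw [hw.limsup_eq, mul_one]

end ENNReal

theorem limsup_div_pow_le_limsup_add {ι : Type*} {l : Filter ι} [l.NeBot] {H : ℕ → ℝ≥0∞} {s : ℕ}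
    (hH : ∀ m, H m ≤ H (m + s)) {n : ι → ℕ} (hn : Tendsto n l atTop) (d : ℕ) :
    limsup (fun i => H (n i) / (n i : ℝ≥0∞) ^ d) l
      ≤ limsup (fun i => H (n i + s) / ((n i + s : ℕ) : ℝ≥0∞) ^ d) l := by
  have hratio := ((ENNReal.continuous_pow d).tendsto 1).comp
    (ENNReal.tendsto_natCast_add_div_natCast hn s)
  rw [one_pow] at hratio
  refine ENNReal.limsup_le_limsup_of_le_mul ?_ hratio
  filter_upwards [hn.eventually_ne_atTop 0] with i hi
  exact ENNReal.div_pow_le_div_pow_mul (hH _) (by exact_mod_cast (by omega : n i + s ≠ 0))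
    (ENNReal.natCast_ne_top _) d

theorem Nat.exists_forall_ge_mem_of_add_mem {S : Set ℕ} (hS : ∀ a ∈ S, ∀ b ∈ S, a + b ∈ S) :
    ∃ N, ∀ m ≥ N, Nat.setGcd S ∣ m → m ∈ S := by
  obtain ⟨N, hN⟩ := Nat.exists_mem_closure_of_ge (s := S)
  have hclosure : ∀ m ∈ AddSubmonoid.closure S, m = 0 ∨ m ∈ S := fun m hm => by
    induction hm using AddSubmonoid.closure_induction with
    | mem a ha => exact Or.inr ha
    | zero => exact Or.inl rfl
    | add a b _ _ iha ihb =>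
      rcases iha with rfl | ha
      · simpa using ihb
      rcases ihb with rfl | hb
      · simpa using Or.inr ha
      exact Or.inr (hS a ha b hb)
  exact ⟨N + 1, fun m hm hdvd => (hclosure m (hN m (by omega) hdvd)).resolve_left (by omega)⟩

theorem limsup_progression_le {H : ℕ → ℝ≥0∞} {e N : ℕ} (he : e ≠ 0)
    (hH : ∀ m, ∀ t ≥ N, H m ≤ H (m + t * e)) {p : ℕ} (hp : 0 < p) (d f r r' : ℕ) :
    limsup (fun k => H (f + (k * p + r) * e) / ((f + (k * p + r) * e : ℕ) : ℝ≥0∞) ^ d) atTop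
      ≤ limsup (fun k => H (f + (k * p + r') * e) / ((f + (k * p + r') * e : ℕ) : ℝ≥0∞) ^ d)
          atTop := by
  -- shifting `k * p + r` by `D` lands on the progression of `r'`, `c` terms later
  set c := N + r
  set D := c * p + r' - r
  have hD : N ≤ D := by have := Nat.le_mul_of_pos_right c hp; omega
  have hshift : ∀ k, f + (k * p + r) * e + D * e = f + ((k + c) * p + r') * e := fun k => by
    have hidx : k * p + r + D = (k + c) * p + r' := by
      have := Nat.le_mul_of_pos_right c hp
      rw [add_mul]; omega
    rw [← hidx]; ring
  have hn : Tendsto (fun k => f + (k * p + r) * e) atTop atTop :=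
    tendsto_atTop_mono (fun k => show k ≤ _ by
      have := Nat.le_mul_of_pos_right k hp
      have := Nat.le_mul_of_pos_right (k * p + r) (Nat.pos_of_ne_zero he)
      omega) tendsto_id
  calc _ ≤ limsup (fun k => H (f + (k * p + r) * e + D * e)
          / ((f + (k * p + r) * e + D * e : ℕ) : ℝ≥0∞) ^ d) atTop :=
        limsup_div_pow_le_limsup_add (fun m => hH m D hD) hn d
    _ = limsup (fun k => H (f + ((k + c) * p + r') * e)
          / ((f + ((k + c) * p + r') * e : ℕ) : ℝ≥0∞) ^ d) atTop := by simp only [hshift]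
    _ = _ := limsup_nat_add (fun k => H (f + (k * p + r') * e)
          / ((f + (k * p + r') * e : ℕ) : ℝ≥0∞) ^ d) c

theorem limsup_thinned_progression_shift_invariant_general (S : Set ℕ)
    (hSadd : ∀ a ∈ S, ∀ b ∈ S, a + b ∈ S)
    (e : ℕ)
    (he : (∀ s ∈ S, e ∣ s) ∧ ∀ c : ℕ, (∀ s ∈ S, c ∣ s) → c ∣ e)
    (d : ℕ)
    (h : ℕ → ℝ≥0)
    (hmono : ∀ k : ℕ, ∀ s ∈ S, h k ≤ h (k + s))
    (f p : ℕ) (hp : 0 < p) :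
    ∀ r : ℕ,
      limsup (fun k : ℕ =>
          (Nat.factorial d : ℝ≥0∞) * (h (f + (k * p + r) * e) : ℝ≥0∞)
            / ((f + (k * p + r) * e : ℕ) : ℝ≥0∞) ^ d) atTop
        = limsup (fun k : ℕ =>
            (Nat.factorial d : ℝ≥0∞) * (h (f + (k * p + 0) * e) : ℝ≥0∞)
              / ((f + (k * p + 0) * e : ℕ) : ℝ≥0∞) ^ d) atTop := by
  rcases eq_or_ne e 0 with rfl | he₀
  · simp
  have he_gcd : e = Nat.setGcd S := Nat.dvd_antisymm (Nat.dvd_setGcd_iff.mpr he.1)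
    (he.2 _ fun _ => Nat.setGcd_dvd_of_mem)
  obtain ⟨N, hN⟩ := Nat.exists_forall_ge_mem_of_add_mem hSadd
  have hH : ∀ m, ∀ t ≥ N, (Nat.factorial d : ℝ≥0∞) * h m ≤ Nat.factorial d * h (m + t * e) :=
      fun m t ht => by
    have hmem : t * e ∈ S :=
      hN _ (by nlinarith [Nat.pos_of_ne_zero he₀]) (he_gcd ▸ dvd_mul_left e t)
    gcongr
    exact hmono m _ hmem
  intro r
  exact le_antisymm (limsup_progression_le he₀ hH hp d f r 0)
    (limsup_progression_le he₀ hH hp d f 0 r)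

theorem limsup_thinned_progression_shift_invariant (S : Set ℕ)
    (hS0 : ∃ n ∈ S, n ≠ 0)
    (hSadd : ∀ a ∈ S, ∀ b ∈ S, a + b ∈ S)
    (e : ℕ)
    (he : (∀ s ∈ S, e ∣ s) ∧ ∀ c : ℕ, (∀ s ∈ S, c ∣ s) → c ∣ e)
    (d : ℕ) (hd : 1 ≤ d)
    (h : ℕ → ℝ≥0)
    (hmono : ∀ k : ℕ, ∀ s ∈ S, h k ≤ h (k + s))
    (f p : ℕ) (hp : 0 < p) :
    ∀ r : ℕ,
      limsup (fun k : ℕ =>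
          (Nat.factorial d : ℝ≥0∞) * (h (f + (k * p + r) * e) : ℝ≥0∞)
            / ((f + (k * p + r) * e : ℕ) : ℝ≥0∞) ^ d) atTop
        = limsup (fun k : ℕ =>
            (Nat.factorial d : ℝ≥0∞) * (h (f + (k * p + 0) * e) : ℝ≥0∞)
              / ((f + (k * p + 0) * e : ℕ) : ℝ≥0∞) ^ d) atTop :=
  limsup_thinned_progression_shift_invariant_general S hSadd e he d h hmono f p hp
end

section
/- Let S ⊆ ℕ contain a nonzero element and be closed under addition, let e = gcd S, let d ≥ 1 be an integer, and let h : ℕ → ℝ≥0 satisfy h(k + s) ≥ h(k) for every k ∈ ℕ and every s ∈ S. Then for every f ∈ ℕ and every positive integer p, limsup_{m→∞} d!·h(f + m·e)/(f + m·e)^d = limsup_{k→∞} d!·h(f + k·p·e)/(f + k·p·e)^d, both limsups taken in [0, ∞]. In other words, the limsup along the arithmetic progression f + ℕ·e is unchanged when the progression is thinned to step p·e. -/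
/-!
Every large enough multiple of `e = gcd S` lies in `S`, so along the progression `f + ℕ e` the
function `h` does not decrease over long enough gaps. Each term `f + m e` is therefore dominated
by a term `f + k p e` of the thinned progression lying a bounded distance beyond it, and the
ratio of the `d`-th powers of the two indices tends to `1`: the full limsup is at most the
thinned one. The converse holds for any subsequence.
-/

open Filter
open scoped ENNReal NNReal Topology

theorem Nat.mem_of_mem_closure_of_ne_zero {S : Set ℕ} (hS : ∀ a ∈ S, ∀ b ∈ S, a + b ∈ S)
    {n : ℕ} (hn : n ∈ AddSubmonoid.closure S) : n ≠ 0 → n ∈ S := by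
  induction hn using AddSubmonoid.closure_induction with
  | mem x hx => exact fun _ => hx
  | zero => exact fun h => absurd rfl h
  | add x y _ _ ihx ihy =>
    intro hxy
    rcases eq_or_ne x 0 with rfl | hx0
    · simpa using ihy (by simpa using hxy)
    rcases eq_or_ne y 0 with rfl | hy0
    · simpa using ihx (by simpa using hxy)
    exact hS x (ihx hx0) y (ihy hy0)

theorem Nat.eventually_mem_of_setGcd_dvd {S : Set ℕ} (hS : ∀ a ∈ S, ∀ b ∈ S, a + b ∈ S) :
    ∀ᶠ m in atTop, Nat.setGcd S ∣ m → m ∈ S := by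
  obtain ⟨N, hN⟩ := Nat.exists_mem_closure_of_ge S
  filter_upwards [eventually_ge_atTop N, eventually_ne_atTop 0] with m hmN hm0 hdvd
  exact Nat.mem_of_mem_closure_of_ne_zero hS (hN m hmN hdvd) hm0

theorem ENNReal.limsup_le_limsup_of_forall_lt_one_mul_le {ι : Type*} {l : Filter ι}
    {u v : ι → ℝ≥0∞} (h : ∀ a < 1, ∀ᶠ i in l, a * u i ≤ v i) :
    limsup u l ≤ limsup v l :=
  ENNReal.le_of_forall_lt_one_mul_le fun a ha => by
    rw [← ENNReal.limsup_const_mul_of_ne_top ha.ne_top]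
    exact limsup_le_limsup (h a ha)

theorem ENNReal.eventually_mul_add_pow_le (d C : ℕ) {a : ℝ≥0∞} (ha : a < 1) :
    ∀ᶠ n : ℕ in atTop, a * ((n : ℝ≥0∞) + C) ^ d ≤ (n : ℝ≥0∞) ^ d := by
  lift a to ℝ≥0 using ha.ne_top
  have hlim : Tendsto (fun n : ℕ ↦ ((n : ℝ≥0) / (n + C)) ^ d) atTop (𝓝 1) := by
    simpa using (tendsto_natCast_div_add_atTop (C : ℝ≥0)).pow d
  filter_upwards [hlim.eventually (eventually_gt_nhds (by exact_mod_cast ha)),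
    eventually_gt_atTop 0] with n hn hn0
  rw [div_pow, lt_div_iff₀ (by positivity)] at hn
  exact_mod_cast hn.le

theorem ENNReal.mul_div_le_div_of_mul_le {a x y N N' : ℝ≥0∞} (hN0 : N ≠ 0) (hN : N ≠ ⊤)
    (hN'0 : N' ≠ 0) (hN' : N' ≠ ⊤) (hNN' : a * N' ≤ N) (hxy : x ≤ y) :
    a * (x / N) ≤ y / N' := by
  rw [ENNReal.le_div_iff_mul_le (.inl hN'0) (.inl hN')]
  calc a * (x / N) * N' = x / N * (a * N') := by ring
    _ ≤ x / N * N := by gcongr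
    _ = x := ENNReal.div_mul_cancel hN0 hN
    _ ≤ y := hxy

theorem limsup_div_pow_le_of_le_of_le_add {ι : Type*} {l : Filter ι} {x : ℕ → ℝ≥0∞}
    {φ ψ : ι → ℕ} (d C : ℕ) (hφ : Tendsto φ l atTop) (hφψ : ∀ i, φ i ≤ ψ i)
    (hψφ : ∀ i, ψ i ≤ φ i + C) (hx : ∀ i, x (φ i) ≤ x (ψ i)) :
    limsup (fun i => x (φ i) / (φ i : ℝ≥0∞) ^ d) l
      ≤ limsup (fun i => x (ψ i) / (ψ i : ℝ≥0∞) ^ d) l := by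
  refine ENNReal.limsup_le_limsup_of_forall_lt_one_mul_le fun a ha => ?_
  filter_upwards [hφ.eventually (ENNReal.eventually_mul_add_pow_le d C ha),
    hφ.eventually_ne_atTop 0] with i hpow hφ0
  have hψ0 : ψ i ≠ 0 := (Nat.pos_of_ne_zero hφ0).trans_le (hφψ i) |>.ne'
  refine ENNReal.mul_div_le_div_of_mul_le (by simp [hφ0]) (by simp) (by simp [hψ0]) (by simp)
    ?_ (hx i)
  calc a * (ψ i : ℝ≥0∞) ^ d ≤ a * ((φ i : ℝ≥0∞) + C) ^ d := by gcongr; exact_mod_cast hψφ i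
    _ ≤ (φ i : ℝ≥0∞) ^ d := hpow

theorem limsup_progression_le_limsup_thinned {x : ℕ → ℝ≥0∞} {f e : ℕ} (d : ℕ) {p : ℕ}
    (he : 0 < e) (hp : 0 < p) {N : ℕ} (hx : ∀ m t, N ≤ t → x (f + m * e) ≤ x (f + (m + t) * e)) :
    limsup (fun m => x (f + m * e) / ((f + m * e : ℕ) : ℝ≥0∞) ^ d) atTop
      ≤ limsup (fun j => x (f + j * p * e) / ((f + j * p * e : ℕ) : ℝ≥0∞) ^ d) atTop := by
  -- `k m * p` is the first multiple of `p` beyond `m + N`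
  set k : ℕ → ℕ := fun m => (m + N) / p + 1
  have hk : ∀ m, m + N < k m * p ∧ k m * p ≤ m + N + p := fun m => by
    simp only [k, add_one_mul]
    exact ⟨Nat.lt_div_mul_add hp, by have := Nat.div_mul_le_self (m + N) p; omega⟩
  have hk_tendsto : Tendsto k atTop atTop := (tendsto_add_atTop_nat 1).comp <|
    (Nat.tendsto_div_const_atTop hp.ne').comp (tendsto_add_atTop_nat N)
  set u : ℕ → ℝ≥0∞ := fun m => x (f + m * e) / ((f + m * e : ℕ) : ℝ≥0∞) ^ d
  calc limsup u atTop ≤ limsup (fun m => u (k m * p)) atTop := by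
        refine limsup_div_pow_le_of_le_of_le_add d ((N + p) * e)
          (tendsto_atTop_mono (fun m => (Nat.le_mul_of_pos_right m he).trans
            (Nat.le_add_left _ f)) tendsto_id) (fun m => ?_) (fun m => ?_) (fun m => ?_)
        · have := (hk m).1
          gcongr
          omega
        · nlinarith [(hk m).2]
        · have hkm := (hk m).1
          have := hx m (k m * p - m) (by omega)
          rwa [Nat.add_sub_cancel' (by omega)] at this
    _ ≤ limsup (fun j => u (j * p)) atTop :=
      hk_tendsto.limsup_comp_le_limsup (u := fun j => u (j * p))

theorem limsup_progression_eq_limsup_thinned_general (S : Set ℕ)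
    (hSadd : ∀ a ∈ S, ∀ b ∈ S, a + b ∈ S)
    (e : ℕ)
    (he : (∀ s ∈ S, e ∣ s) ∧ ∀ c : ℕ, (∀ s ∈ S, c ∣ s) → c ∣ e)
    (d : ℕ)
    (h : ℕ → ℝ≥0)
    (hmono : ∀ k : ℕ, ∀ s ∈ S, h k ≤ h (k + s))
    (f p : ℕ) (hp : 0 < p) :
    limsup (fun m : ℕ =>
        (Nat.factorial d : ℝ≥0∞) * (h (f + m * e) : ℝ≥0∞)
          / ((f + m * e : ℕ) : ℝ≥0∞) ^ d) atTop
      = limsup (fun k : ℕ =>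
          (Nat.factorial d : ℝ≥0∞) * (h (f + k * p * e) : ℝ≥0∞)
            / ((f + k * p * e : ℕ) : ℝ≥0∞) ^ d) atTop := by
  rcases e.eq_zero_or_pos with rfl | he0
  · simp
  have hgcd : Nat.setGcd S = e :=
    dvd_antisymm (he.2 _ fun _ => Nat.setGcd_dvd_of_mem) (Nat.dvd_setGcd_iff.mpr he.1)
  obtain ⟨N, hN⟩ := (Nat.eventually_mem_of_setGcd_dvd hSadd).exists_forall_of_atTop
  set x : ℕ → ℝ≥0∞ := fun n => (Nat.factorial d : ℝ≥0∞) * h n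
  set u : ℕ → ℝ≥0∞ := fun m => x (f + m * e) / ((f + m * e : ℕ) : ℝ≥0∞) ^ d
  change limsup u atTop = limsup (fun j => u (j * p)) atTop
  refine le_antisymm (limsup_progression_le_limsup_thinned (N := N) d he0 hp fun m t ht => ?_)
    ((tendsto_id.atTop_mul_const' hp).limsup_comp_le_limsup (u := u))
  have hS : t * e ∈ S := hN _ (ht.trans (Nat.le_mul_of_pos_right t he0)) (hgcd ▸ dvd_mul_left e t)
  simp only [x, add_mul, ← add_assoc]
  gcongr
  exact hmono _ _ hS

theorem limsup_progression_eq_limsup_thinned (S : Set ℕ)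
    (hS0 : ∃ n ∈ S, n ≠ 0)
    (hSadd : ∀ a ∈ S, ∀ b ∈ S, a + b ∈ S)
    (e : ℕ)
    (he : (∀ s ∈ S, e ∣ s) ∧ ∀ c : ℕ, (∀ s ∈ S, c ∣ s) → c ∣ e)
    (d : ℕ) (hd : 1 ≤ d)
    (h : ℕ → ℝ≥0)
    (hmono : ∀ k : ℕ, ∀ s ∈ S, h k ≤ h (k + s))
    (f p : ℕ) (hp : 0 < p) :
    limsup (fun m : ℕ =>
        (Nat.factorial d : ℝ≥0∞) * (h (f + m * e) : ℝ≥0∞)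
          / ((f + m * e : ℕ) : ℝ≥0∞) ^ d) atTop
      = limsup (fun k : ℕ =>
          (Nat.factorial d : ℝ≥0∞) * (h (f + k * p * e) : ℝ≥0∞)
            / ((f + k * p * e : ℕ) : ℝ≥0∞) ^ d) atTop :=
  limsup_progression_eq_limsup_thinned_general S hSadd e he d h hmono f p hp
end

section
/- Let S ⊆ ℕ contain a nonzero element and be closed under addition, let e = gcd S, let d ≥ 1 be an integer, and let h : ℕ → ℝ≥0 satisfy h(k + s) ≥ h(k) for every k ∈ ℕ and every s ∈ S. Fix a positive integer p and set e_p = e / gcd(p, e). Then for every f ∈ ℕ, limsup_{m→∞} d!·h(p·f + m·p·e_p)/(f + m·e_p)^d = p^d · limsup_{m→∞} d!·h(p·f + m·e)/(p·f + m·e)^d, both limsups taken in [0, ∞]. -/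
/-! Since `p * (e / gcd p e) = (p / gcd p e) * e`, the `m`-th term on the left is `p ^ d` times the
term of index `m * (p / gcd p e)` on the right, so it suffices that the right-hand limsup does not
change along the multiples of `q = p / gcd p e`. The additive monoid generated by `S` contains all
large multiples of `e`, hence `h (p f + m e) ≤ h (p f + n e)` as soon as `n ≥ m + N`. Taking for `n`
the first multiple of `q` beyond `m + N` bounds the `m`-th term by the `n`-th one times
`((p f + n e) / (p f + m e)) ^ d`, a factor tending to `1`. -/

open Filter Topology
open scoped ENNReal NNReal

namespace ENNReal

theorem limsup_le_limsup_of_le_comp_mul {α β : Type*} {f : Filter α} [f.NeBot] {g : Filter β}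
    {u : α → ℝ≥0∞} {v : β → ℝ≥0∞} {r : α → ℝ≥0∞} {j : α → β}
    (hj : Tendsto j f g) (hr : Tendsto r f (𝓝 1)) (huv : ∀ᶠ x in f, u x ≤ v (j x) * r x) :
    limsup u f ≤ limsup v g :=
  calc limsup u f ≤ limsup ((v ∘ j) * r) f := limsup_le_limsup huv
    _ ≤ limsup (v ∘ j) f * limsup r f :=
      limsup_mul_le' (.inr (by simp [hr.limsup_eq])) (.inr (by simp [hr.limsup_eq]))
    _ = limsup (v ∘ j) f := by rw [hr.limsup_eq, mul_one]
    _ ≤ limsup v g := hj.limsup_comp_le_limsup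

theorem tendsto_natCast_div_natCast_nhds_one {α : Type*} {l : Filter α} {a b : α → ℕ} (K : ℕ)
    (ha : Tendsto a l atTop) (hab : ∀ x, a x ≤ b x) (hba : ∀ x, b x ≤ a x + K) :
    Tendsto (fun x => (b x : ℝ≥0∞) / a x) l (𝓝 1) := by
  have hpos : ∀ᶠ x in l, a x ≠ 0 := ha.eventually_ne_atTop 0
  have hupper : Tendsto (fun x => 1 + (K : ℝ≥0∞) / a x) l (𝓝 1) := by
    have : Tendsto (fun x => (K : ℝ≥0∞) / a x) l (𝓝 0) := by
      simpa using ENNReal.Tendsto.const_div (ENNReal.tendsto_nat_nhds_top.comp ha)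
        (.inr (natCast_ne_top K))
    simpa using tendsto_const_nhds.add this
  refine tendsto_of_tendsto_of_tendsto_of_le_of_le' tendsto_const_nhds hupper ?_ ?_
  · filter_upwards [hpos] with x hx
    rw [ENNReal.le_div_iff_mul_le (.inl (by simpa using hx)) (.inl (natCast_ne_top _)), one_mul]
    exact_mod_cast hab x
  · filter_upwards [hpos] with x hx
    rw [← ENNReal.div_self (a := (a x : ℝ≥0∞)) (by simpa using hx) (natCast_ne_top _),
      ← ENNReal.add_div]
    gcongr
    exact_mod_cast hba x

theorem div_pow_le_div_pow_mul_div_pow {a b x y : ℝ≥0∞} (hab : a ≤ b) (hy₀ : y ≠ 0) (hy : y ≠ ∞)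
    (d : ℕ) : a / x ^ d ≤ b / y ^ d * (y / x) ^ d := by
  have hyd₀ : y ^ d ≠ 0 := pow_ne_zero d hy₀
  have hyd : y ^ d ≠ ∞ := pow_ne_top hy
  calc a / x ^ d ≤ b / x ^ d := by gcongr
    _ = b / y ^ d * (y / x) ^ d := by
      simp only [div_eq_mul_inv, mul_pow]
      rw [mul_assoc, ← mul_assoc (y ^ d)⁻¹, ENNReal.inv_mul_cancel hyd₀ hyd, one_mul,
        ENNReal.inv_pow]

end ENNReal

theorem le_add_of_mem_addSubmonoidClosure {M β : Type*} [AddMonoid M] [Preorder β] {S : Set M}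
    {h : M → β} (hS : ∀ k, ∀ s ∈ S, h k ≤ h (k + s)) {s : M}
    (hs : s ∈ AddSubmonoid.closure S) (k : M) : h k ≤ h (k + s) := by
  induction hs using AddSubmonoid.closure_induction generalizing k with
  | mem s hs => exact hS k s hs
  | zero => rw [add_zero]
  | add s t _ _ hs ht => exact (hs k).trans ((ht (k + s)).trans_eq (by rw [add_assoc]))

theorem Nat.exists_mul_mem_addSubmonoidClosure {S : Set ℕ} {e : ℕ} (he : Nat.setGcd S ∣ e) :
    ∃ N, ∀ n ≥ N, n * e ∈ AddSubmonoid.closure S := by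
  rcases Nat.eq_zero_or_pos e with rfl | he₀
  · exact ⟨0, fun n _ => by simp [zero_mem]⟩
  obtain ⟨N, hN⟩ := Nat.exists_mem_closure_of_ge S
  exact ⟨N, fun n hn => hN _ (hn.trans (Nat.le_mul_of_pos_right n he₀))
    (dvd_mul_of_dvd_right he n)⟩

theorem exists_add_le_imp_le_of_setGcd_dvd {β : Type*} [Preorder β] {S : Set ℕ} {h : ℕ → β}
    (hS : ∀ k, ∀ s ∈ S, h k ≤ h (k + s)) {e : ℕ} (he : Nat.setGcd S ∣ e) (k : ℕ) :
    ∃ N, ∀ m n, m + N ≤ n → h (k + m * e) ≤ h (k + n * e) := by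
  obtain ⟨N, hN⟩ := Nat.exists_mul_mem_addSubmonoidClosure he
  refine ⟨N, fun m n hmn => ?_⟩
  obtain ⟨t, rfl⟩ := Nat.exists_eq_add_of_le (le_of_add_le_left hmn)
  have := le_add_of_mem_addSubmonoidClosure hS (hN t (by omega)) (k + m * e)
  rwa [add_assoc, ← add_mul] at this

theorem limsup_comp_mul_right_eq_limsup {φ : ℕ → ℝ≥0∞} {N : ℕ}
    (hφ : ∀ m n, m + N ≤ n → φ m ≤ φ n) (a d : ℕ) {e q : ℕ} (he : 0 < e) (hq : 0 < q) :
    limsup (fun m => φ (m * q) / ((a + m * q * e : ℕ) : ℝ≥0∞) ^ d) atTop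
      = limsup (fun m => φ m / ((a + m * e : ℕ) : ℝ≥0∞) ^ d) atTop := by
  set G : ℕ → ℝ≥0∞ := fun m => φ m / ((a + m * e : ℕ) : ℝ≥0∞) ^ d
  have hmul : Tendsto (· * q) atTop atTop :=
    tendsto_atTop_mono (fun m => Nat.le_mul_of_pos_right m hq) tendsto_id
  refine le_antisymm (hmul.limsup_comp_le_limsup (u := G)) ?_
  -- Compare `G m` with `G n` at the first multiple `n` of `q` with `m + N ≤ n`.
  set j : ℕ → ℕ := fun m => (m + N) / q + 1
  have hj_lower : ∀ m, m + N ≤ j m * q := fun m => by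
    simpa [j, add_one_mul] using (Nat.lt_div_mul_add (a := m + N) hq).le
  have hj_upper : ∀ m, j m * q ≤ m + (N + q) := fun m => by
    have := Nat.div_mul_le_self (m + N) q
    simp only [j, add_one_mul]
    omega
  have hj : Tendsto j atTop atTop :=
    tendsto_atTop_atTop.2 fun b => ⟨b * q, fun m hm => by
      have := (Nat.le_div_iff_mul_le hq).2 (hm.trans (Nat.le_add_right m N))
      simp only [j]
      omega⟩
  have hdenom : Tendsto (fun m => a + m * e) atTop atTop :=
    tendsto_atTop_mono (fun m => (Nat.le_mul_of_pos_right m he).trans (Nat.le_add_left _ a))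
      tendsto_id
  have hratio : Tendsto (fun m => ((a + j m * q * e : ℕ) / (a + m * e : ℕ) : ℝ≥0∞) ^ d)
      atTop (𝓝 1) := by
    have := ENNReal.Tendsto.pow (n := d) <|
      ENNReal.tendsto_natCast_div_natCast_nhds_one (b := fun m => a + j m * q * e) ((N + q) * e)
        hdenom
        (fun m => Nat.add_le_add_left (Nat.mul_le_mul_right e
          ((Nat.le_add_right m N).trans (hj_lower m))) a)
        (fun m => by nlinarith [hj_upper m])
    rwa [one_pow] at this
  refine ENNReal.limsup_le_limsup_of_le_comp_mul hj hratio (.of_forall fun m => ?_)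
  refine ENNReal.div_pow_le_div_pow_mul_div_pow (hφ _ _ (hj_lower m)) ?_
    (ENNReal.natCast_ne_top _) d
  have : 0 < j m * q := Nat.mul_pos (Nat.succ_pos _) hq
  positivity

theorem upsilon_homogeneity_general (S : Set ℕ)
    (e : ℕ)
    (he : (∀ s ∈ S, e ∣ s) ∧ ∀ c : ℕ, (∀ s ∈ S, c ∣ s) → c ∣ e)
    (d : ℕ)
    (h : ℕ → ℝ≥0)
    (hmono : ∀ k : ℕ, ∀ s ∈ S, h k ≤ h (k + s))
    (p : ℕ) (hp : 0 < p) :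
    ∀ f : ℕ,
      limsup (fun m : ℕ =>
          (Nat.factorial d : ℝ≥0∞) * (h (p * f + m * p * (e / Nat.gcd p e)) : ℝ≥0∞)
            / ((f + m * (e / Nat.gcd p e) : ℕ) : ℝ≥0∞) ^ d) atTop
        = (p : ℝ≥0∞) ^ d *
          limsup (fun m : ℕ =>
            (Nat.factorial d : ℝ≥0∞) * (h (p * f + m * e) : ℝ≥0∞)
              / ((p * f + m * e : ℕ) : ℝ≥0∞) ^ d) atTop := by
  intro f
  set g := Nat.gcd p e
  have hq : 0 < p / g := Nat.div_pos (Nat.gcd_le_left e hp) (Nat.gcd_pos_of_pos_left e hp)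
  have hpe : p * (e / g) = p / g * e := by
    rw [← Nat.mul_div_assoc p (Nat.gcd_dvd_right p e),
      Nat.div_mul_right_comm (Nat.gcd_dvd_left p e)]
  have hpd₀ : (p : ℝ≥0∞) ^ d ≠ 0 := pow_ne_zero d (by exact_mod_cast hp.ne')
  have hpd : (p : ℝ≥0∞) ^ d ≠ ∞ := ENNReal.pow_ne_top (ENNReal.natCast_ne_top p)
  have hterm : ∀ m : ℕ,
      (d.factorial : ℝ≥0∞) * (h (p * f + m * p * (e / g)) : ℝ≥0∞)
          / ((f + m * (e / g) : ℕ) : ℝ≥0∞) ^ d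
        = (p : ℝ≥0∞) ^ d * ((d.factorial : ℝ≥0∞) * (h (p * f + m * (p / g) * e) : ℝ≥0∞)
          / ((p * f + m * (p / g) * e : ℕ) : ℝ≥0∞) ^ d) := fun m => by
    have hsplit : p * f + m * (p / g) * e = p * (f + m * (e / g)) := by
      rw [mul_assoc m, ← hpe]; ring
    rw [hsplit, show p * f + m * p * (e / g) = p * (f + m * (e / g)) by ring, Nat.cast_mul,
      mul_pow, ← mul_div_assoc, ENNReal.mul_div_mul_left _ _ hpd₀ hpd]
  simp only [hterm]
  rw [ENNReal.limsup_const_mul_of_ne_top hpd]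
  congr 1
  rcases Nat.eq_zero_or_pos e with rfl | he₀
  · simp only [mul_zero]
  obtain ⟨N, hN⟩ := exists_add_le_imp_le_of_setGcd_dvd hmono
    (he.2 _ fun _ => Nat.setGcd_dvd_of_mem) (p * f)
  exact limsup_comp_mul_right_eq_limsup
    (fun m n hmn => mul_le_mul_right (ENNReal.coe_le_coe.2 (hN m n hmn)) _) (p * f) d he₀ hq

theorem upsilon_homogeneity (S : Set ℕ)
    (hS0 : ∃ n ∈ S, n ≠ 0)
    (hSadd : ∀ a ∈ S, ∀ b ∈ S, a + b ∈ S)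
    (e : ℕ)
    (he : (∀ s ∈ S, e ∣ s) ∧ ∀ c : ℕ, (∀ s ∈ S, c ∣ s) → c ∣ e)
    (d : ℕ) (hd : 1 ≤ d)
    (h : ℕ → ℝ≥0)
    (hmono : ∀ k : ℕ, ∀ s ∈ S, h k ≤ h (k + s))
    (p : ℕ) (hp : 0 < p) :
    ∀ f : ℕ,
      limsup (fun m : ℕ =>
          (Nat.factorial d : ℝ≥0∞) * (h (p * f + m * p * (e / Nat.gcd p e)) : ℝ≥0∞)
            / ((f + m * (e / Nat.gcd p e) : ℕ) : ℝ≥0∞) ^ d) atTop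
        = (p : ℝ≥0∞) ^ d *
          limsup (fun m : ℕ =>
            (Nat.factorial d : ℝ≥0∞) * (h (p * f + m * e) : ℝ≥0∞)
              / ((p * f + m * e : ℕ) : ℝ≥0∞) ^ d) atTop :=
  upsilon_homogeneity_general S e he d h hmono p hp
end

section
/- Let S ⊆ ℕ contain a nonzero element and be closed under addition, let e = gcd S, let d ≥ 1 be an integer, and let h : ℕ → ℝ≥0 satisfy h(k + s) ≥ h(k) for every k ∈ ℕ and every s ∈ S. If p is a positive integer with gcd(p, e) = 1, then limsup_{k→∞} d!·h(p·k)/k^d = p^d · limsup_{k→∞} d!·h(k)/k^d, both limsups taken in [0, ∞]. -/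
open Filter
open scoped ENNReal NNReal
open scoped Topology

theorem volume_homogeneity_coprime (S : Set ℕ)
    (hS0 : ∃ n ∈ S, n ≠ 0)
    (hSadd : ∀ a ∈ S, ∀ b ∈ S, a + b ∈ S)
    (e : ℕ)
    (he : (∀ s ∈ S, e ∣ s) ∧ ∀ c : ℕ, (∀ s ∈ S, c ∣ s) → c ∣ e)
    (d : ℕ) (hd : 1 ≤ d)
    (h : ℕ → ℝ≥0)
    (hmono : ∀ k : ℕ, ∀ s ∈ S, h k ≤ h (k + s))
    (p : ℕ) (hp : 0 < p) (hpe : Nat.gcd p e = 1) :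
    limsup (fun k : ℕ =>
        (Nat.factorial d : ℝ≥0∞) * (h (p * k) : ℝ≥0∞) / (k : ℝ≥0∞) ^ d) atTop
      = (p : ℝ≥0∞) ^ d *
        limsup (fun k : ℕ =>
          (Nat.factorial d : ℝ≥0∞) * (h k : ℝ≥0∞) / (k : ℝ≥0∞) ^ d) atTop := by
  classical
  haveI : NeZero p := ⟨hp.ne'⟩
  -- positive multiples of elements of S stay in S
  have hnsmul : ∀ (n : ℕ), n ≠ 0 → ∀ s ∈ S, n * s ∈ S := by
    intro n hn s hs
    induction n with
    | zero => simp at hn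
    | succ m ih =>
      rcases Nat.eq_zero_or_pos m with hm | hm
      · simpa [hm] using hs
      · have := hSadd _ (ih hm.ne') _ hs
        simpa [Nat.succ_mul] using this
  obtain ⟨s₀, hs₀S, hs₀⟩ := hS0
  -- the residues of S mod p form an additive subgroup of ZMod p
  let A : AddSubgroup (ZMod p) :=
  { carrier := {x | ∃ s ∈ S, (s : ZMod p) = x}
    zero_mem' := by
      refine ⟨p * s₀, hnsmul p hp.ne' s₀ hs₀S, ?_⟩
      push_cast
      simp
    add_mem' := by
      rintro x y ⟨s, hs, rfl⟩ ⟨t, ht, rfl⟩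
      exact ⟨s + t, hSadd s hs t ht, by push_cast; ring⟩
    neg_mem' := by
      rintro x ⟨s, hs, rfl⟩
      refine ⟨(2 * p - 1) * s, hnsmul _ (by omega) s hs, ?_⟩
      have h1 : ((2 * p - 1 : ℕ) : ZMod p) = -1 := by
        rw [Nat.cast_sub (by omega : 1 ≤ 2 * p)]
        push_cast
        simp
      rw [Nat.cast_mul, h1]
      ring }
  -- e lies in the subgroup of ℤ generated by S
  set H : AddSubgroup ℤ := AddSubgroup.closure ((fun n : ℕ => (n : ℤ)) '' S) with hH
  obtain ⟨g, hg⟩ := Int.subgroup_cyclic H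
  have hmemH : ∀ s ∈ S, (s : ℤ) ∈ H := fun s hs =>
    AddSubgroup.subset_closure ⟨s, hs, rfl⟩
  have hgdvd : ∀ s ∈ S, g ∣ (s : ℤ) := by
    intro s hs
    have hmem := hmemH s hs
    rw [hg, AddSubgroup.mem_closure_singleton] at hmem
    obtain ⟨n, hn⟩ := hmem
    exact ⟨n, by rw [← hn]; rw [smul_eq_mul]; ring⟩
  have hgnat : g.natAbs ∣ e := by
    refine he.2 _ (fun s hs => ?_)
    have := Int.natAbs_dvd_natAbs.mpr (hgdvd s hs)
    simpa using this
  have heH : (e : ℤ) ∈ H := by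
    rw [hg, AddSubgroup.mem_closure_singleton]
    have hdvd : g ∣ (e : ℤ) := Int.natAbs_dvd.mp (Int.natCast_dvd_natCast.mpr hgnat)
    obtain ⟨c, hc⟩ := hdvd
    exact ⟨c, by rw [smul_eq_mul, hc]; ring⟩
  -- hence (e : ZMod p) is in A
  have heA : ((e : ℕ) : ZMod p) ∈ A := by
    have hle : H ≤ A.comap (Int.castAddHom (ZMod p)) := by
      rw [hH]
      refine (AddSubgroup.closure_le _).mpr ?_
      rintro x ⟨s, hs, rfl⟩
      show ((s : ℤ) : ZMod p) ∈ A
      exact ⟨s, hs, by push_cast; ring⟩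
    have := hle heH
    simpa using this
  -- hence 1 ∈ A, by Bézout
  have honeA : (1 : ZMod p) ∈ A := by
    have hb := Nat.gcd_eq_gcd_ab p e
    have hcast : (1 : ZMod p) = ((Nat.gcdB p e : ℤ) : ZMod p) * ((e : ℕ) : ZMod p) := by
      have hc := congrArg (fun z : ℤ => (z : ZMod p)) hb
      simp only [hpe] at hc
      push_cast at hc
      rw [ZMod.natCast_self] at hc
      rw [zero_mul, zero_add] at hc
      simpa [mul_comm] using hc
    have := A.zsmul_mem heA (Nat.gcdB p e)
    rwa [zsmul_eq_mul, ← hcast] at this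
  -- so A is everything: every residue is achieved by an element of S
  have hA_top : ∀ x : ZMod p, ∃ s ∈ S, (s : ZMod p) = x := by
    intro x
    have hx : x ∈ A := by
      have := A.nsmul_mem honeA (ZMod.val x)
      rwa [nsmul_eq_mul, mul_one, ZMod.natCast_zmod_val] at this
    exact hx
  -- representative function and the bound C
  choose f hfS hfval using hA_top
  set C : ℕ := Finset.univ.sup f with hC
  have hrep : ∀ k : ℕ, ∃ m : ℕ, k ≤ p * m ∧ p * m ≤ k + C ∧ h k ≤ h (p * m) := by
    intro k
    have hsS : f (-(k : ZMod p)) ∈ S := hfS _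
    have hdvd : p ∣ k + f (-(k : ZMod p)) := by
      have hz : ((k + f (-(k : ZMod p)) : ℕ) : ZMod p) = 0 := by
        push_cast
        rw [hfval]
        ring
      exact (ZMod.natCast_eq_zero_iff _ _).mp hz
    obtain ⟨m, hm⟩ := hdvd
    have hsC : f (-(k : ZMod p)) ≤ C := Finset.le_sup (Finset.mem_univ _)
    refine ⟨m, by omega, by omega, ?_⟩
    rw [← hm]
    exact hmono k _ hsS
  -- the analysis
  set F : ℕ → ℝ≥0∞ := fun k =>
    (Nat.factorial d : ℝ≥0∞) * (h k : ℝ≥0∞) / (k : ℝ≥0∞) ^ d with hF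
  have hpd0 : ((p : ℝ≥0∞)) ^ d ≠ 0 := by
    apply pow_ne_zero
    exact_mod_cast hp.ne'
  have hpdtop : ((p : ℝ≥0∞)) ^ d ≠ ⊤ := ENNReal.pow_ne_top (ENNReal.natCast_ne_top p)
  have hGF : ∀ᶠ k : ℕ in atTop,
      (Nat.factorial d : ℝ≥0∞) * (h (p * k) : ℝ≥0∞) / (k : ℝ≥0∞) ^ d
        = (p : ℝ≥0∞) ^ d * F (p * k) := by
    filter_upwards [eventually_ge_atTop 1] with k hk
    have hsplit : ((p * k : ℕ) : ℝ≥0∞) ^ d = (p : ℝ≥0∞) ^ d * (k : ℝ≥0∞) ^ d := by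
      push_cast
      rw [mul_pow]
    rw [hF]
    simp only
    rw [hsplit, ← mul_div_assoc,
      ENNReal.mul_div_mul_left _ _ hpd0 hpdtop]
  have htendpk : Tendsto (fun k : ℕ => p * k) atTop atTop :=
    Filter.tendsto_atTop_mono (fun k => Nat.le_mul_of_pos_left k hp) tendsto_id
  have hle1 : limsup (fun k : ℕ => F (p * k)) atTop ≤ limsup F atTop := by
    have hmapeq : limsup (fun k : ℕ => F (p * k)) atTop
        = limsup F (Filter.map (fun k : ℕ => p * k) atTop) := rfl
    rw [hmapeq]
    exact Filter.limsup_le_limsup_of_le htendpk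
  have hle2 : limsup F atTop ≤ limsup (fun k : ℕ => F (p * k)) atTop := by
    refine le_of_forall_gt_imp_ge_of_dense ?_
    intro b hb
    obtain ⟨b', hb1', hb2'⟩ := exists_between hb
    have hb'top : b' ≠ ⊤ := hb2'.ne_top
    have hev : ∀ᶠ m : ℕ in atTop, F (p * m) ≤ b' :=
      (Filter.eventually_lt_of_limsup_lt hb1').mono (fun m hm => hm.le)
    rw [eventually_atTop] at hev
    obtain ⟨M, hM⟩ := hev
    have hbound : ∀ᶠ k : ℕ in atTop,
        F k ≤ b' * (((k : ℝ≥0∞) + (C : ℝ≥0∞)) / (k : ℝ≥0∞)) ^ d := by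
      filter_upwards [eventually_ge_atTop (max 1 (p * M))] with k hk
      obtain ⟨m, hm1, hm2, hm3⟩ := hrep k
      have hk1 : 1 ≤ k := le_trans (le_max_left _ _) hk
      have hmM : M ≤ m := by
        have hpm : p * M ≤ p * m := le_trans (le_trans (le_max_right _ _) hk) hm1
        exact Nat.le_of_mul_le_mul_left hpm hp
      have hFm : F (p * m) ≤ b' := hM m hmM
      have hpm0 : ((p * m : ℕ) : ℝ≥0∞) ≠ 0 := by
        have h1pm : 1 ≤ p * m := le_trans hk1 hm1
        exact_mod_cast (Nat.one_le_iff_ne_zero.mp h1pm)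
      have hcancel : (Nat.factorial d : ℝ≥0∞) * (h (p * m) : ℝ≥0∞)
          / ((p * m : ℕ) : ℝ≥0∞) ^ d * ((p * m : ℕ) : ℝ≥0∞) ^ d
          = (Nat.factorial d : ℝ≥0∞) * (h (p * m) : ℝ≥0∞) :=
        ENNReal.div_mul_cancel (pow_ne_zero d hpm0)
          (ENNReal.pow_ne_top (ENNReal.natCast_ne_top _))
      have hnum : (Nat.factorial d : ℝ≥0∞) * (h (p * m) : ℝ≥0∞)
          ≤ b' * ((p * m : ℕ) : ℝ≥0∞) ^ d := by
        rw [← hcancel]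
        exact mul_le_mul_left hFm _
      have step1 : F k ≤ b' * ((p * m : ℕ) : ℝ≥0∞) ^ d / (k : ℝ≥0∞) ^ d := by
        refine ENNReal.div_le_div ?_ le_rfl
        calc (Nat.factorial d : ℝ≥0∞) * (h k : ℝ≥0∞)
            ≤ (Nat.factorial d : ℝ≥0∞) * (h (p * m) : ℝ≥0∞) :=
              mul_le_mul_right (ENNReal.coe_le_coe.mpr hm3) _
          _ ≤ b' * ((p * m : ℕ) : ℝ≥0∞) ^ d := hnum
      have hcast : ((p * m : ℕ) : ℝ≥0∞) ≤ (k : ℝ≥0∞) + (C : ℝ≥0∞) := by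
        rw [← Nat.cast_add]
        exact_mod_cast hm2
      calc F k ≤ b' * ((p * m : ℕ) : ℝ≥0∞) ^ d / (k : ℝ≥0∞) ^ d := step1
        _ ≤ b' * ((k : ℝ≥0∞) + (C : ℝ≥0∞)) ^ d / (k : ℝ≥0∞) ^ d := by
            gcongr
        _ = b' * (((k : ℝ≥0∞) + (C : ℝ≥0∞)) / (k : ℝ≥0∞)) ^ d := by
            rw [mul_div_assoc, div_eq_mul_inv, div_eq_mul_inv, mul_pow, ENNReal.inv_pow]
    have htend : Tendsto (fun k : ℕ => b' * (((k : ℝ≥0∞) + (C : ℝ≥0∞)) / (k : ℝ≥0∞)) ^ d)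
        atTop (𝓝 b') := by
      have h1 : Tendsto (fun k : ℕ => ((k : ℝ≥0∞) + (C : ℝ≥0∞)) / (k : ℝ≥0∞)) atTop (𝓝 1) := by
        have heq : ∀ᶠ k : ℕ in atTop,
            1 + (C : ℝ≥0∞) * ((k : ℝ≥0∞))⁻¹ = ((k : ℝ≥0∞) + (C : ℝ≥0∞)) / (k : ℝ≥0∞) := by
          filter_upwards [eventually_ge_atTop 1] with k hk
          have hk0 : (k : ℝ≥0∞) ≠ 0 := by
            exact_mod_cast (Nat.one_le_iff_ne_zero.mp hk)
          rw [ENNReal.add_div, ENNReal.div_self hk0 (ENNReal.natCast_ne_top k),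
            div_eq_mul_inv]
        have h2 : Tendsto (fun k : ℕ => 1 + (C : ℝ≥0∞) * ((k : ℝ≥0∞))⁻¹) atTop (𝓝 1) := by
          have h3 := ENNReal.Tendsto.const_mul (a := (C : ℝ≥0∞))
            ENNReal.tendsto_inv_nat_nhds_zero (Or.inr (ENNReal.natCast_ne_top C))
          have h4 := Filter.Tendsto.add (tendsto_const_nhds (x := (1 : ℝ≥0∞))) h3
          simpa using h4
        exact h2.congr' heq
      have h3 := ENNReal.Tendsto.pow h1 (n := d)
      have h4 := ENNReal.Tendsto.const_mul (a := b') h3 (Or.inr hb'top)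
      simpa using h4
    calc limsup F atTop
        ≤ limsup (fun k : ℕ => b' * (((k : ℝ≥0∞) + (C : ℝ≥0∞)) / (k : ℝ≥0∞)) ^ d) atTop :=
          Filter.limsup_le_limsup hbound
      _ = b' := htend.limsup_eq
      _ ≤ b := hb2'.le
  calc limsup (fun k : ℕ =>
        (Nat.factorial d : ℝ≥0∞) * (h (p * k) : ℝ≥0∞) / (k : ℝ≥0∞) ^ d) atTop
      = limsup (fun k : ℕ => (p : ℝ≥0∞) ^ d * F (p * k)) atTop := Filter.limsup_congr hGF
    _ = (p : ℝ≥0∞) ^ d * limsup (fun k : ℕ => F (p * k)) atTop :=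
        ENNReal.limsup_const_mul_of_ne_top hpdtop
    _ = (p : ℝ≥0∞) ^ d * limsup F atTop := by
        rw [le_antisymm hle1 hle2]
end

section
/- Let S ⊆ ℕ contain a nonzero element and be closed under addition, let e = gcd S, let d ≥ 1 be an integer, and let h : ℕ → ℝ≥0 satisfy h(k + s) ≥ h(k) for every k ∈ ℕ and every s ∈ S. Then for every positive integer q, limsup_{k→∞} d!·h(q·k)/k^d = (q / gcd(q, e))^d · limsup_{k→∞} d!·h(gcd(q, e)·k)/k^d, both limsups taken in [0, ∞]. -/
open Filter
open scoped ENNReal NNReal Topology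

private lemma nsmul_mem_S {S : Set ℕ}
    (hSadd : ∀ a ∈ S, ∀ b ∈ S, a + b ∈ S) {z : ℕ} (hz : z ∈ S) :
    ∀ c : ℕ, 0 < c → c * z ∈ S := by
  intro c hc
  induction c with
  | zero => exact (Nat.lt_irrefl 0 hc).elim
  | succ n ih =>
    rcases Nat.eq_zero_or_pos n with h0 | hn
    · subst h0; simpa using hz
    · have := hSadd _ (ih hn) _ hz
      simpa [Nat.succ_mul] using this

private lemma semigroup_large_multiples (S : Set ℕ)
    (hS0 : ∃ n ∈ S, n ≠ 0)
    (hSadd : ∀ a ∈ S, ∀ b ∈ S, a + b ∈ S)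
    (e : ℕ)
    (he : (∀ s ∈ S, e ∣ s) ∧ ∀ c : ℕ, (∀ s ∈ S, c ∣ s) → c ∣ e) :
    ∃ N, 0 < N ∧ ∀ n, e ∣ n → N ≤ n → n ∈ S := by
  obtain ⟨s₀, hs₀S, hs₀⟩ := hS0
  have he_pos : 0 < e := by
    rcases Nat.eq_zero_or_pos e with h0 | hp
    · exact absurd (zero_dvd_iff.mp (h0 ▸ he.1 s₀ hs₀S)) hs₀
    · exact hp
  have hadd0 : ∀ a b : ℕ, (a ∈ S ∨ a = 0) → (b ∈ S ∨ b = 0) → (a + b ∈ S ∨ a + b = 0) := by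
    rintro a b (ha | rfl) (hb | rfl)
    · exact Or.inl (hSadd a ha b hb)
    · exact Or.inl (by simpa using ha)
    · exact Or.inl (by simpa using hb)
    · simp
  set H : AddSubgroup ℤ :=
    { carrier := {z | ∃ a b : ℕ, (a ∈ S ∨ a = 0) ∧ (b ∈ S ∨ b = 0) ∧ z = (a : ℤ) - b}
      zero_mem' := ⟨0, 0, Or.inr rfl, Or.inr rfl, by simp⟩
      add_mem' := by
        rintro x y ⟨a, b, ha, hb, rfl⟩ ⟨c', d', hc, hd, rfl⟩
        exact ⟨a + c', b + d', hadd0 a c' ha hc, hadd0 b d' hb hd, by push_cast; ring⟩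
      neg_mem' := by
        rintro x ⟨a, b, ha, hb, rfl⟩
        exact ⟨b, a, hb, ha, by ring⟩ } with hHdef
  obtain ⟨w, hw⟩ := Int.subgroup_cyclic H
  have hmemH : ∀ z : ℤ, z ∈ H ↔ w ∣ z := by
    intro z
    rw [hw, AddSubgroup.mem_closure_singleton]
    constructor
    · rintro ⟨n, rfl⟩; exact ⟨n, by rw [zsmul_eq_mul]; push_cast; ring⟩
    · rintro ⟨n, rfl⟩; exact ⟨n, by rw [zsmul_eq_mul]; push_cast; ring⟩
  have hSH : ∀ s ∈ S, (s : ℤ) ∈ H := fun s hs => ⟨s, 0, Or.inl hs, Or.inr rfl, by simp⟩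
  have hwdvd : w.natAbs ∣ e := by
    refine he.2 _ fun s hs => ?_
    have : w ∣ (s : ℤ) := (hmemH s).mp (hSH s hs)
    simpa using Int.natAbs_dvd_natAbs.mpr this
  have hwH : w ∈ H := by rw [hmemH]
  have hedvd : e ∣ w.natAbs := by
    obtain ⟨a, b, ha, hb, hab⟩ := hwH
    have hea : e ∣ a := by rcases ha with ha | rfl; exacts [he.1 a ha, dvd_zero e]
    have heb : e ∣ b := by rcases hb with hb | rfl; exacts [he.1 b hb, dvd_zero e]
    have : (e : ℤ) ∣ w := hab ▸ dvd_sub (Int.natCast_dvd_natCast.mpr hea) (Int.natCast_dvd_natCast.mpr heb)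
    simpa using Int.natAbs_dvd_natAbs.mpr this
  have hwe : w.natAbs = e := Nat.dvd_antisymm hwdvd hedvd
  have heH : (e : ℤ) ∈ H := by
    rcases Int.natAbs_eq w with h1 | h1
    · rw [← hwe, ← h1]; exact hwH
    · rw [← hwe]
      have := H.neg_mem hwH
      rwa [h1, neg_neg] at this
  obtain ⟨a, b, ha, hb, hab⟩ := heH
  have habn : a = b + e := by
    have : (a : ℤ) = (b : ℤ) + (e : ℤ) := by linarith [hab]
    exact_mod_cast this
  have haS : a ∈ S := by
    rcases ha with ha | rfl
    · exact ha
    · exact absurd habn (by omega)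
  have heb : e ∣ b := by rcases hb with hb | rfl; exacts [he.1 b hb, dvd_zero e]
  obtain ⟨y', hy'⟩ := heb
  refine ⟨e * ((y' + 1) * y' + 1), by positivity, fun n hdn hNn => ?_⟩
  obtain ⟨t, rfl⟩ := hdn
  have ht : (y' + 1) * y' + 1 ≤ t := Nat.le_of_mul_le_mul_left hNn he_pos
  have ha_eq : a = e * (y' + 1) := by rw [habn, hy']; ring
  rcases Nat.eq_zero_or_pos y' with hy0 | hy0
  · -- b = 0, a = e
    have : e * t = t * a := by subst hy0; rw [ha_eq]; ring
    rw [this]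
    exact nsmul_mem_S hSadd haS t (by omega)
  · have hbS : b ∈ S := by
      rcases hb with hb | rfl
      · exact hb
      · exact absurd hy'.symm (Nat.mul_ne_zero he_pos.ne' hy0.ne')
    set u := t % y' with hu
    set wq := t / y' with hwq
    have h1 : y' * wq + u = t := Nat.div_add_mod t y'
    have h2 : u < y' := Nat.mod_lt _ hy0
    have hwu : u ≤ wq := by
      have : y' ≤ wq := (Nat.le_div_iff_mul_le hy0).mpr (by nlinarith)
      omega
    set v := wq - u with hv
    have hrep : u * (y' + 1) + v * y' = t := by
      have huv : u + v = wq := by omega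
      calc u * (y' + 1) + v * y' = (u + v) * y' + u := by ring
        _ = wq * y' + u := by rw [huv]
        _ = t := by rw [← h1]; ring
    have hneq : e * t = u * a + v * b := by
      rw [← hrep, ha_eq, hy']; ring
    rw [hneq]
    rcases Nat.eq_zero_or_pos u with hu0 | hu0
    · have hv0 : 0 < v := by nlinarith
      rw [hu0]
      simpa using nsmul_mem_S hSadd hbS v hv0
    · rcases Nat.eq_zero_or_pos v with hv0 | hv0
      · rw [hv0]
        simpa using nsmul_mem_S hSadd haS u hu0
      · exact hSadd _ (nsmul_mem_S hSadd haS u hu0) _ (nsmul_mem_S hSadd hbS v hv0)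

theorem volume_general_homogeneity (S : Set ℕ)
    (hS0 : ∃ n ∈ S, n ≠ 0)
    (hSadd : ∀ a ∈ S, ∀ b ∈ S, a + b ∈ S)
    (e : ℕ)
    (he : (∀ s ∈ S, e ∣ s) ∧ ∀ c : ℕ, (∀ s ∈ S, c ∣ s) → c ∣ e)
    (d : ℕ) (hd : 1 ≤ d)
    (h : ℕ → ℝ≥0)
    (hmono : ∀ k : ℕ, ∀ s ∈ S, h k ≤ h (k + s))
    (q : ℕ) (hq : 0 < q) :
    limsup (fun k : ℕ =>
        (Nat.factorial d : ℝ≥0∞) * (h (q * k) : ℝ≥0∞) / (k : ℝ≥0∞) ^ d) atTop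
      = ((q / Nat.gcd q e : ℕ) : ℝ≥0∞) ^ d *
        limsup (fun k : ℕ =>
          (Nat.factorial d : ℝ≥0∞) * (h (Nat.gcd q e * k) : ℝ≥0∞) / (k : ℝ≥0∞) ^ d) atTop := by
  obtain ⟨N, hNpos, hN⟩ := semigroup_large_multiples S hS0 hSadd e he
  obtain ⟨s₀, hs₀S, hs₀⟩ := hS0
  have he_pos : 0 < e := by
    rcases Nat.eq_zero_or_pos e with h0 | hp
    · exact absurd (zero_dvd_iff.mp (h0 ▸ he.1 s₀ hs₀S)) hs₀
    · exact hp
  set g := Nat.gcd q e with hgdef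
  have hgq : g ∣ q := Nat.gcd_dvd_left q e
  have hge : g ∣ e := Nat.gcd_dvd_right q e
  have hgpos : 0 < g := Nat.gcd_pos_of_pos_left e hq
  set q' := q / g with hq'def
  set e' := e / g with he'def
  have hq'mul : g * q' = q := Nat.mul_div_cancel' hgq
  have he'mul : g * e' = e := Nat.mul_div_cancel' hge
  have hq'pos : 0 < q' := Nat.div_pos (Nat.le_of_dvd hq hgq) hgpos
  have he'pos : 0 < e' := Nat.div_pos (Nat.le_of_dvd he_pos hge) hgpos
  have hcop : Nat.Coprime q' e' := Nat.coprime_div_gcd_div_gcd hgpos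
  set f : ℕ → ℝ≥0∞ :=
    fun m => (Nat.factorial d : ℝ≥0∞) * (h (g * m) : ℝ≥0∞) / (m : ℝ≥0∞) ^ d with hfdef
  have hq'0 : (q' : ℝ≥0∞) ≠ 0 := by exact_mod_cast hq'pos.ne'
  have hq't : (q' : ℝ≥0∞) ≠ ⊤ := ENNReal.natCast_ne_top q'
  have hqd0 : ((q' : ℝ≥0∞)) ^ d ≠ 0 := pow_ne_zero d hq'0
  have hqdt : ((q' : ℝ≥0∞)) ^ d ≠ ⊤ := ENNReal.pow_ne_top hq't
  have hpt : ∀ k : ℕ, (Nat.factorial d : ℝ≥0∞) * (h (q * k) : ℝ≥0∞) / (k : ℝ≥0∞) ^ d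
      = (q' : ℝ≥0∞) ^ d * f (q' * k) := by
    intro k
    have h1 : q * k = g * (q' * k) := by rw [← hq'mul, mul_assoc]
    have h2 : ((q' * k : ℕ) : ℝ≥0∞) ^ d = (q' : ℝ≥0∞) ^ d * (k : ℝ≥0∞) ^ d := by
      push_cast; rw [mul_pow]
    simp only [hfdef]
    rw [← h1, h2, ← mul_div_assoc, ENNReal.mul_div_mul_left _ _ hqd0 hqdt]
  have hLHS : limsup (fun k : ℕ =>
        (Nat.factorial d : ℝ≥0∞) * (h (q * k) : ℝ≥0∞) / (k : ℝ≥0∞) ^ d) atTop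
      = (q' : ℝ≥0∞) ^ d * limsup (fun k : ℕ => f (q' * k)) atTop := by
    rw [← ENNReal.limsup_const_mul_of_ne_top hqdt]
    exact limsup_congr (Eventually.of_forall hpt)
  have hu : Tendsto (fun k : ℕ => q' * k) atTop atTop := by
    apply Filter.tendsto_atTop_atTop.mpr
    exact fun b => ⟨b, fun a ha => le_trans ha (Nat.le_mul_of_pos_left a hq'pos)⟩
  have hmap : limsup (fun k : ℕ => f (q' * k)) atTop
      = limsup f (map (fun k : ℕ => q' * k) atTop) := by
    simp [Filter.limsup_eq, Filter.eventually_map]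
  have hle1 : limsup (fun k : ℕ => f (q' * k)) atTop ≤ limsup f atTop := by
    rw [hmap]; exact limsup_le_limsup_of_le hu
  have hge1 : limsup f atTop ≤ limsup (fun k : ℕ => f (q' * k)) atTop := by
    refine le_of_forall_gt_imp_ge_of_dense fun c hc => ?_
    rcases eq_top_or_lt_top c with rfl | hct
    · exact le_top
    have hev := eventually_lt_of_limsup_lt hc
    obtain ⟨K, hK⟩ := eventually_atTop.mp hev
    set C := N + q' + q' * e' with hC
    haveI : NeZero e' := ⟨he'pos.ne'⟩
    have key : ∀ m : ℕ, max (q' * K) 1 ≤ m →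
        f m ≤ c * (((m + C : ℕ) : ℝ≥0∞) ^ d / (m : ℝ≥0∞) ^ d) := by
      intro m hm
      have hm1 : 1 ≤ m := le_trans (le_max_right _ _) hm
      have hmK : q' * K ≤ m := le_trans (le_max_left _ _) hm
      set k₀ := (m + N) / q' + 1 with hk₀
      have hdm2 : q' * ((m + N) / q') + (m + N) % q' = m + N := Nat.div_add_mod (m + N) q'
      have hmod : (m + N) % q' < q' := Nat.mod_lt _ hq'pos
      have hk₀eq : q' * k₀ = q' * ((m + N) / q') + q' := by rw [hk₀, Nat.mul_add, Nat.mul_one]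
      have hk0low : m + N < q' * k₀ := by omega
      have hk0high : q' * k₀ ≤ m + N + q' := by omega
      set z : ZMod e' := ((m : ZMod e') - ((q' * k₀ : ℕ) : ZMod e')) * (q' : ZMod e')⁻¹ with hz
      set j := z.val with hj
      have hjlt : j < e' := ZMod.val_lt z
      set k := k₀ + j with hk
      have hqk_eq : q' * k = q' * k₀ + q' * j := by rw [hk, Nat.mul_add]
      have hmlt : m + N < q' * k := by omega
      have hkhigh : q' * k ≤ m + C := by
        have hje : q' * j ≤ q' * e' := Nat.mul_le_mul_left _ hjlt.le
        omega
      have hcongr : ((q' * k : ℕ) : ZMod e') = (m : ZMod e') := by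
        have h1 : ((q' * k : ℕ) : ZMod e') = ((q' * k₀ : ℕ) : ZMod e') + (q' : ZMod e') * z := by
          rw [hqk_eq]
          push_cast
          congr 1
          rw [hj, ZMod.natCast_zmod_val]
        have h2 : (q' : ZMod e') * z = (m : ZMod e') - ((q' * k₀ : ℕ) : ZMod e') := by
          rw [hz]
          have h3 : (q' : ZMod e') * (((m : ZMod e') - ((q' * k₀ : ℕ) : ZMod e')) * (q' : ZMod e')⁻¹)
              = ((m : ZMod e') - ((q' * k₀ : ℕ) : ZMod e')) * ((q' : ZMod e') * (q' : ZMod e')⁻¹) := by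
            ring
          rw [h3, ZMod.coe_mul_inv_eq_one q' hcop, mul_one]
        rw [h1, h2]; ring
      have hmle : m ≤ q' * k := by omega
      have hdvd : e' ∣ q' * k - m :=
        (Nat.modEq_iff_dvd' hmle).mp (((ZMod.natCast_eq_natCast_iff _ _ _).mp hcongr).symm)
      have hsdvd : e ∣ g * (q' * k - m) := by
        rw [← he'mul]; exact Nat.mul_dvd_mul_left g hdvd
      have hsge : N ≤ g * (q' * k - m) := by
        have h1 : N ≤ q' * k - m := by omega
        calc N ≤ q' * k - m := h1
          _ ≤ g * (q' * k - m) := Nat.le_mul_of_pos_left _ hgpos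
      have hsS : g * (q' * k - m) ∈ S := hN _ hsdvd hsge
      have hhh : (h (g * m) : ℝ≥0) ≤ h (g * (q' * k)) := by
        have h1 := hmono (g * m) _ hsS
        have h2 : g * m + g * (q' * k - m) = g * (q' * k) := by
          rw [← Nat.mul_add, Nat.add_sub_cancel' hmle]
        rwa [h2] at h1
      have hkK : K ≤ k := Nat.le_of_mul_le_mul_left (le_trans hmK hmle) hq'pos
      have hfk : f (q' * k) ≤ c := (hK k hkK).le
      have hqk1 : 1 ≤ q' * k := by omega
      have hqkne : ((q' * k : ℕ) : ℝ≥0∞) ^ d ≠ 0 := by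
        apply pow_ne_zero
        exact_mod_cast Nat.one_le_iff_ne_zero.mp hqk1
      have hqknetop : ((q' * k : ℕ) : ℝ≥0∞) ^ d ≠ ⊤ := ENNReal.pow_ne_top (ENNReal.natCast_ne_top _)
      have hnum : (Nat.factorial d : ℝ≥0∞) * (h (g * (q' * k)) : ℝ≥0∞)
          ≤ c * ((q' * k : ℕ) : ℝ≥0∞) ^ d := by
        simp only [hfdef] at hfk
        exact (ENNReal.div_le_iff_le_mul (Or.inl hqkne) (Or.inl hqknetop)).mp hfk
      calc f m = (Nat.factorial d : ℝ≥0∞) * (h (g * m) : ℝ≥0∞) / (m : ℝ≥0∞) ^ d := by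
            simp only [hfdef]
        _ ≤ (Nat.factorial d : ℝ≥0∞) * (h (g * (q' * k)) : ℝ≥0∞) / (m : ℝ≥0∞) ^ d := by
            gcongr

        _ ≤ (c * ((q' * k : ℕ) : ℝ≥0∞) ^ d) / (m : ℝ≥0∞) ^ d :=
            ENNReal.div_le_div_right hnum _
        _ ≤ (c * ((m + C : ℕ) : ℝ≥0∞) ^ d) / (m : ℝ≥0∞) ^ d := by
            gcongr
        _ = c * (((m + C : ℕ) : ℝ≥0∞) ^ d / (m : ℝ≥0∞) ^ d) := mul_div_assoc _ _ _
    have hevf : ∀ᶠ m in atTop, f m ≤ c * (((m + C : ℕ) : ℝ≥0∞) ^ d / (m : ℝ≥0∞) ^ d) :=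
      eventually_atTop.mpr ⟨max (q' * K) 1, key⟩
    have htend : Tendsto (fun m : ℕ => c * (((m + C : ℕ) : ℝ≥0∞) ^ d / (m : ℝ≥0∞) ^ d))
        atTop (𝓝 c) := by
      have h1 : Tendsto (fun m : ℕ => ((m + C : ℕ) : ℝ≥0∞) / (m : ℝ≥0∞)) atTop (𝓝 1) := by
        have h0 := ENNReal.Tendsto.const_mul (a := (C : ℝ≥0∞))
          ENNReal.tendsto_inv_nat_nhds_zero (Or.inr (ENNReal.natCast_ne_top C))
        rw [mul_zero] at h0
        have h2 := h0.const_add (1 : ℝ≥0∞)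
        rw [add_zero] at h2
        refine h2.congr' ?_
        filter_upwards [eventually_ge_atTop 1] with m hm
        have hm0 : (m : ℝ≥0∞) ≠ 0 := by exact_mod_cast Nat.one_le_iff_ne_zero.mp hm
        rw [Nat.cast_add m C, ENNReal.add_div, ENNReal.div_self hm0 (ENNReal.natCast_ne_top m),
          div_eq_mul_inv]
      have h3 : Tendsto (fun m : ℕ => (((m + C : ℕ) : ℝ≥0∞) / (m : ℝ≥0∞)) ^ d) atTop (𝓝 1) := by
        simpa using ENNReal.Tendsto.pow (n := d) h1
      have h4 : Tendsto (fun m : ℕ => ((m + C : ℕ) : ℝ≥0∞) ^ d / (m : ℝ≥0∞) ^ d) atTop (𝓝 1) := by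
        refine h3.congr fun m => ?_
        rw [div_eq_mul_inv, mul_pow, ← ENNReal.inv_pow, ← div_eq_mul_inv]
      have := ENNReal.Tendsto.const_mul (a := c) h4 (Or.inl one_ne_zero)
      simpa using this
    calc limsup f atTop
        ≤ limsup (fun m : ℕ => c * (((m + C : ℕ) : ℝ≥0∞) ^ d / (m : ℝ≥0∞) ^ d)) atTop :=
          limsup_le_limsup hevf
      _ = c := htend.limsup_eq
  have hsub : limsup (fun k : ℕ => f (q' * k)) atTop = limsup f atTop := le_antisymm hle1 hge1
  rw [hLHS, hsub]
end

section
/- Let S ⊆ ℕ contain a nonzero element and be closed under addition, let e = gcd S, let d ≥ 1 be an integer, and let h : ℕ → ℝ≥0 satisfy h(k + s) ≥ h(k) for every k ∈ ℕ and every s ∈ S. Then for every positive integer p, limsup_{k→∞} d!·h(p·e·k)/k^d = p^d · limsup_{k→∞} d!·h(e·k)/k^d, both limsups taken in [0, ∞]. -/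
open Filter
open scoped ENNReal NNReal Topology

/-!
Since `e` is the gcd of `S`, every large multiple of `e` lies in the additive monoid generated
by `S`, so `k ↦ h (e * k)` is monotone across gaps of some fixed length `N`. Passing to the
subsequence of multiples of `p` can only lower the limsup of `h (e * k) / k ^ d`; conversely
each `k` is dominated by a multiple `m` of `p` with `k + N ≤ m ≤ k + p * (N + 1)`, and
`m / k → 1`. The factor `p ^ d` is just the rescaling `k ^ d = (p * k) ^ d / p ^ d`.
-/

def MonotoneUpToGap {α : Type*} [Preorder α] (N : ℕ) (f : ℕ → α) : Prop :=
  ∀ ⦃k j : ℕ⦄, k + N ≤ j → f k ≤ f j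

theorem le_apply_add_of_mem_closure {α : Type*} [Preorder α] {S : Set ℕ} {f : ℕ → α}
    (hf : ∀ k, ∀ s ∈ S, f k ≤ f (k + s)) {s : ℕ} (hs : s ∈ AddSubmonoid.closure S) (k : ℕ) :
    f k ≤ f (k + s) := by
  induction hs using AddSubmonoid.closure_induction generalizing k with
  | mem s hs => exact hf k s hs
  | zero => exact le_rfl
  | add a b _ _ iha ihb => exact (iha k).trans (by simpa only [add_assoc] using ihb (k + a))

theorem exists_monotoneUpToGap_comp_setGcd_mul {α : Type*} [Preorder α] {S : Set ℕ}
    {f : ℕ → α} (hf : ∀ k, ∀ s ∈ S, f k ≤ f (k + s)) :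
    ∃ N, MonotoneUpToGap N fun k => f (Nat.setGcd S * k) := by
  obtain ⟨N, hN⟩ := Nat.exists_mem_closure_of_ge S
  refine ⟨N, fun k j hkj => ?_⟩
  obtain ⟨m, rfl⟩ := Nat.exists_eq_add_of_le (k.le_add_right N |>.trans hkj)
  have hm : Nat.setGcd S * m ∈ AddSubmonoid.closure S := by
    rcases (Nat.setGcd S).eq_zero_or_pos with h0 | hpos
    · simp [h0, zero_mem]
    · exact hN _ ((by omega : N ≤ m).trans (Nat.le_mul_of_pos_left m hpos)) (dvd_mul_right _ _)
  simpa only [mul_add] using le_apply_add_of_mem_closure hf hm _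

theorem limsup_comp_mul_le {β : Type*} [CompleteLattice β] (u : ℕ → β) {p : ℕ} (hp : 0 < p) :
    limsup (fun k => u (p * k)) atTop ≤ limsup u atTop :=
  (tendsto_id.const_mul_atTop' hp).limsup_comp_le_limsup

theorem ENNReal.div_pow_le_div_pow_mul_s7 {a b : ℝ≥0∞} {k m C : ℕ} (hab : a ≤ b) (hk : k ≠ 0)
    (hkm : k ≤ m) (hmC : m ≤ k + C) (d : ℕ) :
    a / (k : ℝ≥0∞) ^ d ≤ b / (m : ℝ≥0∞) ^ d * (1 + C * (k : ℝ≥0∞)⁻¹) ^ d := by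
  have hm : (m : ℝ≥0∞) ^ d ≠ 0 := pow_ne_zero _ (by exact_mod_cast (by omega : m ≠ 0))
  have hratio : (m : ℝ≥0∞) / k ≤ 1 + C * (k : ℝ≥0∞)⁻¹ := calc
    (m : ℝ≥0∞) / k ≤ (k + C : ℝ≥0∞) / k := by gcongr; exact_mod_cast hmC
    _ = 1 + C * (k : ℝ≥0∞)⁻¹ := by
      rw [ENNReal.add_div, ENNReal.div_self (by exact_mod_cast hk) (by simp), div_eq_mul_inv]
  calc a / (k : ℝ≥0∞) ^ d ≤ b / (k : ℝ≥0∞) ^ d := by gcongr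
    _ = b / (m : ℝ≥0∞) ^ d * ((m : ℝ≥0∞) / k) ^ d := by
      simp only [div_eq_mul_inv]
      rw [mul_pow, ← ENNReal.inv_pow, mul_assoc, ← mul_assoc _ (_ ^ d),
        ENNReal.inv_mul_cancel hm (by simp), one_mul]
    _ ≤ b / (m : ℝ≥0∞) ^ d * (1 + C * (k : ℝ≥0∞)⁻¹) ^ d := by gcongr

theorem ENNReal.tendsto_one_add_mul_inv_nat_pow (C d : ℕ) :
    Tendsto (fun k : ℕ => (1 + C * (k : ℝ≥0∞)⁻¹) ^ d) atTop (𝓝 1) := by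
  have h := (ENNReal.Tendsto.const_mul ENNReal.tendsto_inv_nat_nhds_zero
    (Or.inr (ENNReal.natCast_ne_top C))).const_add 1
  simpa using ENNReal.Tendsto.pow (n := d) h

namespace MonotoneUpToGap

variable {f : ℕ → ℝ≥0∞} {N p : ℕ}

theorem limsup_div_pow_le (hf : MonotoneUpToGap N f) (hp : 0 < p) (d : ℕ) :
    limsup (fun k => f k / (k : ℝ≥0∞) ^ d) atTop
      ≤ limsup (fun k => f (p * k) / ((p * k : ℕ) : ℝ≥0∞) ^ d) atTop := by
  set G : ℕ → ℝ≥0∞ := fun k => f (p * k) / ((p * k : ℕ) : ℝ≥0∞) ^ d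
  set r : ℕ → ℝ≥0∞ := fun k => (1 + (p * (N + 1) : ℕ) * (k : ℝ≥0∞)⁻¹) ^ d
  set q : ℕ → ℕ := fun k => k / p + N + 1
  have hq : Tendsto q atTop atTop :=
    tendsto_atTop_mono (fun k => (k / p).le_add_right _ |>.trans (Nat.le_succ _))
      (Nat.tendsto_div_const_atTop hp.ne')
  have hbound : ∀ᶠ k in atTop, f k / (k : ℝ≥0∞) ^ d ≤ G (q k) * r k := by
    filter_upwards [eventually_ne_atTop 0] with k hk
    have hlow : k + N ≤ p * q k := by
      have := Nat.lt_mul_div_succ k hp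
      have := Nat.le_mul_of_pos_left N hp
      simp only [q]; nlinarith
    have hup : p * q k ≤ k + p * (N + 1) := by
      have := Nat.mul_div_le k p
      simp only [q]; nlinarith
    exact ENNReal.div_pow_le_div_pow_mul_s7 (hf hlow) hk (by omega) hup d
  have hr : Tendsto r atTop (𝓝 1) := ENNReal.tendsto_one_add_mul_inv_nat_pow _ d
  calc limsup (fun k => f k / (k : ℝ≥0∞) ^ d) atTop
      ≤ limsup (fun k => G (q k) * r k) atTop := limsup_le_limsup hbound
    _ ≤ limsup (G ∘ q) atTop * limsup r atTop :=
      ENNReal.limsup_mul_le' (by simp [hr.limsup_eq]) (by simp [hr.limsup_eq])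
    _ = limsup (G ∘ q) atTop := by rw [hr.limsup_eq, mul_one]
    _ ≤ limsup G atTop := hq.limsup_comp_le_limsup

theorem limsup_comp_mul_div_pow (hf : MonotoneUpToGap N f) (hp : 0 < p) (d : ℕ) :
    limsup (fun k => f (p * k) / (k : ℝ≥0∞) ^ d) atTop
      = (p : ℝ≥0∞) ^ d * limsup (fun k => f k / (k : ℝ≥0∞) ^ d) atTop := by
  have hpd : (p : ℝ≥0∞) ^ d ≠ 0 := pow_ne_zero _ (by exact_mod_cast hp.ne')
  have hscale : ∀ k, f (p * k) / (k : ℝ≥0∞) ^ d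
      = (p : ℝ≥0∞) ^ d * (f (p * k) / ((p * k : ℕ) : ℝ≥0∞) ^ d) := fun k => by
    rw [Nat.cast_mul, mul_pow, ← mul_div_assoc, ENNReal.mul_div_mul_left _ _ hpd (by simp)]
  simp_rw [hscale]
  rw [ENNReal.limsup_const_mul_of_ne_top (by simp)]
  exact congrArg _ <| le_antisymm (limsup_comp_mul_le (fun k => f k / (k : ℝ≥0∞) ^ d) hp)
    (hf.limsup_div_pow_le hp d)

end MonotoneUpToGap

theorem volume_homogeneity_along_exponent_multiples_general (S : Set ℕ)
    (e : ℕ)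
    (he : (∀ s ∈ S, e ∣ s) ∧ ∀ c : ℕ, (∀ s ∈ S, c ∣ s) → c ∣ e)
    (d : ℕ)
    (h : ℕ → ℝ≥0)
    (hmono : ∀ k : ℕ, ∀ s ∈ S, h k ≤ h (k + s))
    (p : ℕ) (hp : 0 < p) :
    limsup (fun k : ℕ =>
        (Nat.factorial d : ℝ≥0∞) * (h (p * e * k) : ℝ≥0∞) / (k : ℝ≥0∞) ^ d) atTop
      = (p : ℝ≥0∞) ^ d *
        limsup (fun k : ℕ =>
          (Nat.factorial d : ℝ≥0∞) * (h (e * k) : ℝ≥0∞) / (k : ℝ≥0∞) ^ d) atTop := by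
  obtain rfl : e = Nat.setGcd S :=
    Nat.dvd_antisymm (Nat.dvd_setGcd_iff.2 he.1) (he.2 _ fun _ => Nat.setGcd_dvd_of_mem)
  obtain ⟨N, hN⟩ := exists_monotoneUpToGap_comp_setGcd_mul hmono
  have hf : MonotoneUpToGap N fun k => (d.factorial : ℝ≥0∞) * h (Nat.setGcd S * k) :=
    fun k j hkj => mul_le_mul_right (ENNReal.coe_le_coe.2 (hN hkj)) _
  simpa only [mul_comm p, mul_assoc] using hf.limsup_comp_mul_div_pow hp d

theorem volume_homogeneity_along_exponent_multiples (S : Set ℕ)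
    (hS0 : ∃ n ∈ S, n ≠ 0)
    (hSadd : ∀ a ∈ S, ∀ b ∈ S, a + b ∈ S)
    (e : ℕ)
    (he : (∀ s ∈ S, e ∣ s) ∧ ∀ c : ℕ, (∀ s ∈ S, c ∣ s) → c ∣ e)
    (d : ℕ) (hd : 1 ≤ d)
    (h : ℕ → ℝ≥0)
    (hmono : ∀ k : ℕ, ∀ s ∈ S, h k ≤ h (k + s))
    (p : ℕ) (hp : 0 < p) :
    limsup (fun k : ℕ =>
        (Nat.factorial d : ℝ≥0∞) * (h (p * e * k) : ℝ≥0∞) / (k : ℝ≥0∞) ^ d) atTop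
      = (p : ℝ≥0∞) ^ d *
        limsup (fun k : ℕ =>
          (Nat.factorial d : ℝ≥0∞) * (h (e * k) : ℝ≥0∞) / (k : ℝ≥0∞) ^ d) atTop :=
  volume_homogeneity_along_exponent_multiples_general S e he d h hmono p hp
end

section
/- Let d ≥ 1 be an integer and let h : ℕ → ℝ≥0 be a function whose support S = {m ∈ ℕ : h(m) > 0} contains a nonzero element, such that: (i) h(a) > 0 and h(b) > 0 imply h(a + b) > 0 (so the positive elements of S form an additive semigroup), and (ii) h(k + s) ≥ h(k) for every k ∈ ℕ and every s with h(s) > 0. Then for every positive integer q, limsup_{k→∞} d!·h(q·k)/k^d = q^d · limsup_{k→∞} d!·h(k)/k^d, both limsups taken in [0, ∞]. -/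
/-!
Condition (ii) propagates from the support of `h` to the additive monoid it generates. Within that
monoid every `k` can be moved forward by a shift `s ≤ C`, with `C` depending only on `q`, to a
multiple of `q` (a bounded witness for each residue class mod `q` suffices), and this does not
decrease `h`. Since `((k + C) / k) ^ d → 1`, the limsup of `h k / k ^ d` along multiples of `q` is
then the full limsup; writing `(q k) ^ d = q ^ d k ^ d` produces the factor `q ^ d`.
-/

open Filter Topology
open scoped ENNReal NNReal

theorem AddSubmonoid.apply_le_apply_add_of_mem_closure {M α : Type*} [AddMonoid M] [Preorder α]
    {S : Set M} {h : M → α} (hS : ∀ k s, s ∈ S → h k ≤ h (k + s))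
    {s : M} (hs : s ∈ AddSubmonoid.closure S) (k : M) : h k ≤ h (k + s) := by
  induction hs using AddSubmonoid.closure_induction generalizing k with
  | mem s hs => exact hS k s hs
  | zero => rw [add_zero]
  | add x y _ _ hx hy => exact (hx k).trans ((hy (k + x)).trans_eq (by rw [add_assoc]))

theorem AddSubmonoid.exists_bounded_add_mem_dvd (T : AddSubmonoid ℕ) {q : ℕ} (hq : 0 < q) :
    ∃ C, ∀ k ∈ T, ∃ s ∈ T, s ≤ C ∧ q ∣ k + s := by
  have residue : ∀ r : Fin q, ∃ C, ∀ k ∈ T, k % q = r → ∃ s ∈ T, s ≤ C ∧ q ∣ k + s := by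
    intro r
    by_cases hr : ∃ k₀ ∈ T, k₀ % q = r
    · obtain ⟨k₀, hk₀, hk₀r⟩ := hr
      refine ⟨(q - 1) * k₀, fun k _ hkr => ⟨(q - 1) * k₀, T.nsmul_mem hk₀ _, le_rfl, ?_⟩⟩
      -- `k + (q - 1) k₀ ≡ k₀ + (q - 1) k₀ = q k₀ [MOD q]`
      have hk : k ≡ k₀ [MOD q] := hkr.trans hk₀r.symm
      have hsum : k₀ + (q - 1) * k₀ = q * k₀ := by
        obtain ⟨p, rfl⟩ : ∃ p, q = p + 1 := ⟨q - 1, by omega⟩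
        simp only [Nat.add_sub_cancel]; ring
      exact (Nat.modEq_zero_iff_dvd).1 <| (hk.add_right _).trans <| by
        rw [hsum]; exact Nat.modEq_zero_iff_dvd.2 (dvd_mul_right q k₀)
    · exact ⟨0, fun k hk hkr => (hr ⟨k, hk, hkr⟩).elim⟩
  choose C hC using residue
  obtain ⟨M, hM⟩ := (Set.finite_range C).bddAbove
  refine ⟨M, fun k hk => ?_⟩
  obtain ⟨s, hsT, hsC, hdvd⟩ := hC ⟨k % q, Nat.mod_lt k hq⟩ k hk rfl
  exact ⟨s, hsT, hsC.trans (hM ⟨_, rfl⟩), hdvd⟩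

theorem ENNReal.tendsto_add_const_div_pow (C d : ℕ) :
    Tendsto (fun k : ℕ => (((k : ℝ≥0∞) + C) / k) ^ d) atTop (𝓝 1) := by
  have hdiv : Tendsto (fun k : ℕ => (C : ℝ≥0∞) / k) atTop (𝓝 0) := by
    simpa using ENNReal.Tendsto.const_div ENNReal.tendsto_nat_nhds_top
      (Or.inr (ENNReal.natCast_ne_top C))
  have hratio : Tendsto (fun k : ℕ => ((k : ℝ≥0∞) + C) / k) atTop (𝓝 1) := by
    refine (by simpa using hdiv.const_add 1 : Tendsto (fun k : ℕ => 1 + (C : ℝ≥0∞) / k) _ _)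
      |>.congr' ?_
    filter_upwards [eventually_ne_atTop 0] with k hk
    rw [ENNReal.add_div, ENNReal.div_self (by exact_mod_cast hk) (ENNReal.natCast_ne_top k)]
  rw [← one_pow d]
  exact ((ENNReal.continuous_pow d).tendsto 1).comp hratio

theorem ENNReal.limsup_le_limsup_of_le_mul_s8 {ι : Type*} {f : Filter ι} [f.NeBot]
    {u v r : ι → ℝ≥0∞} (huv : u ≤ᶠ[f] v * r) (hr : Tendsto r f (𝓝 1)) :
    limsup u f ≤ limsup v f :=
  calc limsup u f ≤ limsup (v * r) f := limsup_le_limsup huv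
    _ ≤ limsup v f * limsup r f :=
      ENNReal.limsup_mul_le' (by simp [hr.limsup_eq]) (by simp [hr.limsup_eq])
    _ = limsup v f := by rw [hr.limsup_eq, mul_one]

theorem limsup_div_pow_comp_mul_eq {a : ℕ → ℝ≥0∞} {d q C : ℕ} (hq : 0 < q)
    (hshift : ∀ k, a k ≠ 0 → ∃ s ≤ C, q ∣ k + s ∧ a k ≤ a (k + s)) :
    limsup (fun k => a (q * k) / ((q * k : ℕ) : ℝ≥0∞) ^ d) atTop
      = limsup (fun k => a k / (k : ℝ≥0∞) ^ d) atTop := by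
  set f : ℕ → ℝ≥0∞ := fun k => a k / (k : ℝ≥0∞) ^ d
  have hmul : Tendsto (q * ·) atTop atTop := tendsto_id.const_mul_atTop' hq
  refine le_antisymm (hmul.limsup_comp_le_limsup (u := f)) ?_
  set F : ℕ → ℝ≥0∞ := fun k => a k / ((k : ℝ≥0∞) + C) ^ d
  have hfF : f ≤ᶠ[atTop] F * (fun k : ℕ => (((k : ℝ≥0∞) + C) / k) ^ d) := by
    filter_upwards [eventually_ne_atTop 0] with k hk
    have hkC : ((k : ℝ≥0∞) + C) ^ d ≠ 0 := pow_ne_zero d (by simp [hk])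
    have hkC' : ((k : ℝ≥0∞) + C) ^ d ≠ ∞ := by simp
    refine le_of_eq ?_
    simp only [f, F, Pi.mul_apply, div_eq_mul_inv, mul_pow, ← ENNReal.inv_pow]
    rw [mul_assoc, ← mul_assoc _ (_ ^ d), ENNReal.inv_mul_cancel hkC hkC', one_mul]
  have hFf : ∀ k, ∃ m, k ≤ q * m ∧ F k ≤ f (q * m) := by
    intro k
    by_cases hk : a k = 0
    · exact ⟨k, Nat.le_mul_of_pos_left k hq, by simp [F, hk]⟩
    obtain ⟨s, hsC, ⟨m, hm⟩, has⟩ := hshift k hk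
    refine ⟨m, hm ▸ Nat.le_add_right k s, ?_⟩
    rw [← hm]
    exact ENNReal.div_le_div has (by gcongr; push_cast; gcongr)
  choose m hkm hFm using hFf
  have hm : Tendsto m atTop atTop :=
    tendsto_atTop_atTop.2 fun N => ⟨q * N, fun k hk =>
      Nat.le_of_mul_le_mul_left (hk.trans (hkm k)) hq⟩
  calc limsup f atTop ≤ limsup F atTop :=
        ENNReal.limsup_le_limsup_of_le_mul_s8 hfF (ENNReal.tendsto_add_const_div_pow C d)
    _ ≤ limsup (fun k => f (q * m k)) atTop := limsup_le_limsup (Eventually.of_forall hFm)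
    _ ≤ limsup (fun k => f (q * k)) atTop := hm.limsup_comp_le_limsup (u := fun k => f (q * k))

theorem zero_volume_full_homogeneity_general (d : ℕ) (h : ℕ → ℝ≥0)
    (hmono : ∀ k s : ℕ, 0 < h s → h k ≤ h (k + s))
    (q : ℕ) (hq : 0 < q) :
    limsup (fun k : ℕ =>
        (Nat.factorial d : ℝ≥0∞) * (h (q * k) : ℝ≥0∞) / (k : ℝ≥0∞) ^ d) atTop
      = (q : ℝ≥0∞) ^ d *
        limsup (fun k : ℕ =>
          (Nat.factorial d : ℝ≥0∞) * (h k : ℝ≥0∞) / (k : ℝ≥0∞) ^ d) atTop := by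
  set a : ℕ → ℝ≥0∞ := fun k => (Nat.factorial d : ℝ≥0∞) * (h k : ℝ≥0∞)
  set T := AddSubmonoid.closure {s | 0 < h s}
  obtain ⟨C, hC⟩ := T.exists_bounded_add_mem_dvd hq
  have hshift : ∀ k, a k ≠ 0 → ∃ s ≤ C, q ∣ k + s ∧ a k ≤ a (k + s) := by
    intro k hk
    have hkT : k ∈ T := AddSubmonoid.subset_closure <|
      pos_iff_ne_zero.2 (ENNReal.coe_ne_zero.1 (right_ne_zero_of_mul hk))
    obtain ⟨s, hsT, hsC, hdvd⟩ := hC k hkT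
    refine ⟨s, hsC, hdvd, ?_⟩
    simp only [a]
    gcongr
    exact AddSubmonoid.apply_le_apply_add_of_mem_closure hmono hsT k
  have hq' : (q : ℝ≥0∞) ^ d ≠ ∞ := by simp
  rw [← limsup_div_pow_comp_mul_eq hq hshift, ← ENNReal.limsup_const_mul_of_ne_top hq']
  congr 1
  funext k
  rw [Nat.cast_mul, mul_pow, ← mul_div_assoc,
    ENNReal.mul_div_mul_left _ _ (by simp [hq.ne']) hq']

theorem zero_volume_full_homogeneity (d : ℕ) (hd : 1 ≤ d) (h : ℕ → ℝ≥0)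
    (hS0 : ∃ m : ℕ, m ≠ 0 ∧ 0 < h m)
    (hadd : ∀ a b : ℕ, 0 < h a → 0 < h b → 0 < h (a + b))
    (hmono : ∀ k s : ℕ, 0 < h s → h k ≤ h (k + s))
    (q : ℕ) (hq : 0 < q) :
    limsup (fun k : ℕ =>
        (Nat.factorial d : ℝ≥0∞) * (h (q * k) : ℝ≥0∞) / (k : ℝ≥0∞) ^ d) atTop
      = (q : ℝ≥0∞) ^ d *
        limsup (fun k : ℕ =>
          (Nat.factorial d : ℝ≥0∞) * (h k : ℝ≥0∞) / (k : ℝ≥0∞) ^ d) atTop :=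
  zero_volume_full_homogeneity_general d h hmono q hq
end
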